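/- arXiv:2402.00780 — 10 statements merged into one kernel-verified Lean document; each statement's English description precedes it below -/
import Mathlib

section
/- Let q = 2^k with k odd, n odd, and α, u ∈ F_{q^n} nonzero. Then there exists exactly one λ ∈ F_q such that the equation u·x^q + u^q·x + λ·u^(q+1) + α = 0 has a solution x ∈ F_{q^n}. -/
theorem stmt2 (k n : ℕ) (hk : Odd k) (hn : Odd n)
    (q : ℕ) (hq : q = 2 ^ k)
    (F : Type) [Field F] [Fintype F] (hF : Fintype.card F = q ^ n)
    (α u : F) (hα : α ≠ 0) (hu : u ≠ 0) :
    ∃! lam : F, lam ^ q = lam ∧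
      ∃ x : F, u * x ^ q + u ^ q * x + lam * u ^ (q + 1) + α = 0 := by
  classical
  haveI : Fact (Nat.Prime 2) := ⟨Nat.prime_two⟩
  -- characteristic 2
  obtain ⟨p, hp⟩ := CharP.exists F
  haveI := hp
  obtain ⟨m, hpp, hcard⟩ := FiniteField.card F p
  have hp2 : p = 2 := by
    have hdvd : p ∣ 2 ^ (k * n) := by
      have : (2:ℕ) ^ (k*n) = p ^ (m:ℕ) := by
        rw [pow_mul, ← hq, ← hF, hcard]
      rw [this]
      exact dvd_pow_self p m.ne_zero
    have := hpp.dvd_of_dvd_pow hdvd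
    exact (Nat.prime_dvd_prime_iff_eq hpp Nat.prime_two).mp this
  subst hp2
  haveI : CharP F 2 := hp
  have hq0 : q ≠ 0 := by rw [hq]; positivity
  have hqpow : ∀ a b : F, (a + b) ^ q = a ^ q + b ^ q := by
    intro a b; rw [hq]; exact add_pow_char_pow a b 2 k
  have hpowcard : ∀ a : F, a ^ q ^ n = a := by
    intro a; rw [← hF]; exact FiniteField.pow_card a
  -- key: the kernel and the image intersect trivially
  have key : ∀ lam y : F, lam ^ q = lam → y ^ q + y = lam → lam = 0 := by
    intro lam y hlam hy
    have hyq : y ^ q = lam + y := by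
      have := eq_sub_of_add_eq hy
      rwa [CharTwo.sub_eq_add] at this
    have hy2 : y ^ (q * q) = y := by
      rw [pow_mul, hyq, hqpow, hlam, hyq, ← add_assoc, CharTwo.add_self_eq_zero, zero_add]
    obtain ⟨j, hj⟩ := hn
    have hev : ∀ i : ℕ, y ^ (q * q) ^ i = y := by
      intro i
      induction i with
      | zero => simp
      | succ i ih => rw [pow_succ, pow_mul, ih, hy2]
    have hthis : y ^ q ^ n = y ^ q := by
      have h1 : q ^ n = (q * q) ^ j * q := by rw [hj]; ring
      rw [h1, pow_mul, hev j]
    rw [hpowcard y, hyq] at hthis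
    exact (right_eq_add.mp hthis)
  -- the additive map y ↦ y^q + y
  let Ψ : F →+ F :=
    { toFun := fun y => y ^ q + y
      map_zero' := by simp [zero_pow hq0]
      map_add' := by intro a b; simp only [hqpow]; ring }
  have hΨ : ∀ y : F, Ψ y = y ^ q + y := fun _ => rfl
  -- cardinality: ker × range ≃ F via addition
  have hcard1 : Nat.card F = Nat.card Ψ.range * Nat.card Ψ.ker := by
    rw [AddSubgroup.card_eq_card_quotient_mul_card_addSubgroup Ψ.ker,
      Nat.card_congr (QuotientAddGroup.quotientKerEquivRange Ψ).toEquiv]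
  have hker : ∀ a : F, a ∈ Ψ.ker ↔ a ^ q = a := by
    intro a
    rw [AddMonoidHom.mem_ker, hΨ]
    constructor
    · intro h
      have := eq_sub_of_add_eq h
      rwa [zero_sub, CharTwo.neg_eq] at this
    · intro h; rw [h, CharTwo.add_self_eq_zero]
  -- the addition map ker × range → F is injective
  have hinj : Function.Injective (fun z : Ψ.ker × Ψ.range => (z.1 : F) + (z.2 : F)) := by
    rintro ⟨⟨a, ha⟩, ⟨b, hb⟩⟩ ⟨⟨a', ha'⟩, ⟨b', hb'⟩⟩ h
    simp only at h
    have hd : a + a' = b + b' := by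
      have : a - a' = b' - b := by linear_combination h
      rwa [CharTwo.sub_eq_add, CharTwo.sub_eq_add, add_comm b'] at this
    have hdk : (a + a') ^ q = a + a' := by
      rw [hqpow, (hker a).mp ha, (hker a').mp ha']
    obtain ⟨y, hy⟩ := hb
    obtain ⟨y', hy'⟩ := hb'
    have hby : (y + y') ^ q + (y + y') = a + a' := by
      rw [hqpow]
      have : y ^ q + y + (y' ^ q + y') = b + b' := by rw [hΨ] at hy hy'; rw [hy, hy']
      rw [← hd] at this
      linear_combination this
    have h0 : a + a' = 0 := key _ _ hdk hby
    have ha0 : a = a' := by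
      have := eq_sub_of_add_eq h0
      rwa [zero_sub, CharTwo.neg_eq] at this
    have hb0 : b = b' := by
      rw [ha0] at h
      exact add_left_cancel h
    simp [ha0, hb0]
  -- injective + card ⇒ bijective ⇒ surjective
  have hsurj : Function.Surjective (fun z : Ψ.ker × Ψ.range => (z.1 : F) + (z.2 : F)) := by
    have hc : Nat.card (Ψ.ker × Ψ.range) = Nat.card F := by
      rw [Nat.card_prod, hcard1, mul_comm]
    exact ((Nat.bijective_iff_injective_and_card _).mpr ⟨hinj, hc⟩).2
  -- the reduced constant
  set c : F := α * (u ^ (q + 1))⁻¹ with hc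
  have hun : u ^ (q + 1) ≠ 0 := pow_ne_zero _ hu
  -- equivalence of the equation with the reduced one
  have hequiv : ∀ lam : F,
      (∃ x : F, u * x ^ q + u ^ q * x + lam * u ^ (q + 1) + α = 0) ↔
      (∃ y : F, y ^ q + y = lam + c) := by
    intro lam
    constructor
    · rintro ⟨x, hx⟩
      refine ⟨x * u⁻¹, ?_⟩
      have hxu : u * x ^ q + u ^ q * x = lam * u ^ (q + 1) + α := by
        have : (u * x ^ q + u ^ q * x) + (lam * u ^ (q + 1) + α) = 0 := by
          linear_combination hx
        have h2 := eq_sub_of_add_eq this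
        rwa [zero_sub, CharTwo.neg_eq] at h2
      apply mul_right_cancel₀ hun
      have e1 : (u⁻¹) ^ q * u ^ (q+1) = u := by
        rw [pow_succ, inv_pow, ← mul_assoc, inv_mul_cancel₀ (pow_ne_zero _ hu), one_mul]
      have e2 : u⁻¹ * u ^ (q+1) = u ^ q := by
        rw [pow_succ, mul_comm (u^q) u, ← mul_assoc, inv_mul_cancel₀ hu, one_mul]
      have e3 : ((x*u⁻¹) ^ q + x*u⁻¹) * u ^ (q+1)
          = x ^ q * ((u⁻¹) ^ q * u ^ (q+1)) + x * (u⁻¹ * u ^ (q+1)) := by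
        rw [mul_pow]; ring
      have e4 : (lam + c) * u ^ (q+1) = lam * u ^ (q+1) + α := by
        rw [hc, add_mul, mul_assoc, inv_mul_cancel₀ hun, mul_one]
      rw [e3, e1, e2, e4, ← hxu]; ring
    · rintro ⟨y, hy⟩
      refine ⟨y * u, ?_⟩
      have h1 : (y ^ q + y) * u ^ (q + 1) = lam * u ^ (q + 1) + α := by
        rw [hy, add_mul, hc, mul_assoc, inv_mul_cancel₀ hun, mul_one]
      have : u * (y * u) ^ q + u ^ q * (y * u) = lam * u ^ (q+1) + α := by
        rw [← h1, mul_pow, pow_succ]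
        ring
      have hst : ∀ s t : F, s + t + s + t = 0 := by
        intro s t
        calc s + t + s + t = (s + t) + (s + t) := by ring
          _ = 0 := CharTwo.add_self_eq_zero _
      rw [this]
      exact hst _ _
  -- put it together
  obtain ⟨⟨⟨a, ha⟩, ⟨b, hb⟩⟩, hab⟩ := hsurj c
  dsimp only at hab
  refine ⟨a, ⟨(hker a).mp ha, ?_⟩, ?_⟩
  · rw [hequiv a]
    obtain ⟨y, hy⟩ := hb
    refine ⟨y, ?_⟩
    rw [hΨ] at hy
    rw [hy, ← hab, ← add_assoc, CharTwo.add_self_eq_zero, zero_add]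
  · rintro lam' ⟨hlam', hx'⟩
    rw [hequiv lam'] at hx'
    obtain ⟨y', hy'⟩ := hx'
    obtain ⟨y, hy⟩ := hb
    rw [hΨ] at hy
    have hyc : y ^ q + y = a + c := by
      rw [hy, ← hab, ← add_assoc, CharTwo.add_self_eq_zero, zero_add]
    have hsum : (y + y') ^ q + (y + y') = lam' + a := by
      rw [hqpow]
      have : (y ^ q + y) + (y' ^ q + y') = (a + c) + (lam' + c) := by rw [hyc, hy']
      have h2 : (y ^ q + y) + (y' ^ q + y') = a + lam' + (c + c) := by rw [this]; ring
      rw [CharTwo.add_self_eq_zero, add_zero] at h2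
      rw [add_comm lam' a, ← h2]; ring
    have hsk : (lam' + a) ^ q = lam' + a := by
      rw [hqpow, hlam', (hker a).mp ha]
    have h0 : lam' + a = 0 := key _ _ hsk hsum
    have := eq_sub_of_add_eq h0
    rwa [zero_sub, CharTwo.neg_eq] at this
end

section
/- Let q = 2^k with k odd and n ≥ 3 odd. If the vectors x + x₀w and y + y₀w (with x, y ∈ F_{q^n}, x₀, y₀ ∈ F_q, and w a basis vector of a rank-1 complement) are F_q-linearly independent in V = F_{q^n} ⊕ F_q, then (x·y^q + x^q·y) + (x·y₀ + x₀·y)^(q+1) ≠ 0. -/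
def Dform {F : Type} [Field F] (q : ℕ) (x x0 y y0 : F) : F :=
  (x * y ^ q + x ^ q * y) + (x * y0 + x0 * y) ^ (q + 1)

def lineSpan {F : Type} [Field F] (q : ℕ) (u v : F × F) : Set (F × F) :=
  {p | ∃ a b : F, a ^ q = a ∧ b ^ q = b ∧ p = (a * u.1 + b * v.1, a * u.2 + b * v.2)}

def IndepPair {F : Type} [Field F] (q : ℕ) (x x0 y y0 : F) : Prop :=
  ∀ a b : F, a ^ q = a → b ^ q = b → a * x + b * y = 0 → a * x0 + b * y0 = 0 → a = 0 ∧ b = 0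

def Bset {F : Type} [Field F] (q : ℕ) (α : F) : Set (Set (F × F)) :=
  {ℓ | ∃ x x0 y y0 : F, x0 ^ q = x0 ∧ y0 ^ q = y0 ∧ IndepPair q x x0 y y0 ∧
    ℓ = lineSpan q (x, x0) (y, y0) ∧ Dform q x x0 y y0 = α}

theorem stmt6 (k n : ℕ) (hk : Odd k) (hn : Odd n) (hn3 : 3 ≤ n)
    (q : ℕ) (hq : q = 2 ^ k)
    (F : Type) [Field F] [Fintype F] (hF : Fintype.card F = q ^ n)
    (x y x0 y0 : F) (hx0 : x0 ^ q = x0) (hy0 : y0 ^ q = y0)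
    (hind : IndepPair q x x0 y y0) :
    Dform q x x0 y y0 ≠ 0 := by
  intro hD
  have hk1 : 1 ≤ k := hk.pos
  have hq2 : 2 ≤ q := by
    rw [hq]
    calc 2 = 2 ^ 1 := (pow_one 2).symm
    _ ≤ 2 ^ k := Nat.pow_le_pow_right (by norm_num) hk1
  have hq0 : q ≠ 0 := by omega
  -- characteristic 2
  haveI := ringChar.charP F
  have hprime : (ringChar F).Prime := CharP.char_is_prime F (ringChar F)
  haveI : Fact (ringChar F).Prime := ⟨hprime⟩
  have hchar2 : ringChar F = 2 := by
    obtain ⟨m, -, hcard⟩ := FiniteField.card F (ringChar F)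
    have hdvd : ringChar F ∣ 2 ^ (k * n) := by
      have he : (2 : ℕ) ^ (k * n) = ringChar F ^ (m : ℕ) := by
        rw [pow_mul, ← hq, ← hF, hcard]
      rw [he]
      exact dvd_pow_self _ m.pos.ne'
    exact (Nat.prime_dvd_prime_iff_eq hprime Nat.prime_two).mp
      (hprime.dvd_of_dvd_pow hdvd)
  haveI hC2 : CharP F 2 := by rw [← hchar2]; exact ringChar.charP F
  have h2 : (2 : F) = 0 := CharTwo.two_eq_zero
  have φadd : ∀ a b : F, (a + b) ^ q = a ^ q + b ^ q := by
    intro a b; rw [hq]; exact add_pow_char_pow a b 2 k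
  have hpn : ∀ z : F, z ^ q ^ n = z := fun z => by
    rw [← hF]; exact FiniteField.pow_card z
  set s : F := x * y0 + x0 * y with hs
  clear_value s
  have hD' : x * y ^ q + x ^ q * y = s ^ (q + 1) := by
    have h := hD
    unfold Dform at h
    rw [← hs] at h
    linear_combination h - s ^ (q + 1) * h2
  by_cases hx : x = 0
  · -- x = 0
    have hs0 : s = 0 := by
      have h0 : s ^ (q + 1) = 0 := by
        rw [← hD', hx, zero_pow hq0]; ring
      exact pow_eq_zero_iff (by omega : q + 1 ≠ 0) |>.mp h0
    have hxy : x0 * y = 0 := by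
      rw [hs, hx] at hs0; linear_combination hs0
    rcases mul_eq_zero.mp hxy with hx0z | hyz
    · obtain ⟨h1, -⟩ := hind 1 0 (one_pow q) (zero_pow hq0)
        (by rw [hx]; ring) (by rw [hx0z]; ring)
      exact one_ne_zero h1
    · obtain ⟨hy0z, hx0z⟩ := hind y0 x0 hy0 hx0
        (by rw [hx, hyz]; ring) (by linear_combination x0 * y0 * h2)
      obtain ⟨h1, -⟩ := hind 1 0 (one_pow q) (zero_pow hq0)
        (by rw [hx, hyz]; ring) (by rw [hx0z]; ring)
      exact one_ne_zero h1
  by_cases hy : y = 0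
  · -- y = 0, x ≠ 0
    have hs0 : s = 0 := by
      have h0 : s ^ (q + 1) = 0 := by
        rw [← hD', hy, zero_pow hq0]; ring
      exact pow_eq_zero_iff (by omega : q + 1 ≠ 0) |>.mp h0
    have hxy : x * y0 = 0 := by
      rw [hs, hy] at hs0; linear_combination hs0
    have hy0z : y0 = 0 := by
      rcases mul_eq_zero.mp hxy with h | h
      · exact absurd h hx
      · exact h
    obtain ⟨-, h1⟩ := hind 0 1 (zero_pow hq0) (one_pow q)
      (by rw [hy]; ring) (by rw [hy0z]; ring)
    exact one_ne_zero h1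
  -- main case: x ≠ 0, y ≠ 0
  set r : F := x * y⁻¹ with hr
  clear_value r
  set c : F := y0 * r + x0 with hc
  clear_value c
  have hxry : x = r * y := by rw [hr]; field_simp
  have hyc : y * c = s := by
    rw [hc, hr, hs]; field_simp
  have hrqpow : r ^ q = x ^ q * (y ^ q)⁻¹ := by
    rw [hr, mul_pow, inv_pow]
  have hkey : r ^ q + r = c ^ (q + 1) := by
    have h3 : y ^ (q + 1) * (r ^ q + r) = x * y ^ q + x ^ q * y := by
      rw [hrqpow, hr, pow_succ]
      have hyq : (y : F) ^ q ≠ 0 := pow_ne_zero _ hy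
      field_simp
      ring
    have h4 : y ^ (q + 1) * (r ^ q + r) = y ^ (q + 1) * c ^ (q + 1) := by
      rw [h3, ← mul_pow, hyc, hD']
    exact mul_left_cancel₀ (pow_ne_zero _ hy) h4
  by_cases hrq : r ^ q = r
  · -- r ∈ F_q
    have hc0 : c = 0 := by
      have h0 : c ^ (q + 1) = 0 := by
        rw [← hkey, hrq]; linear_combination r * h2
      exact pow_eq_zero_iff (by omega : q + 1 ≠ 0) |>.mp h0
    rw [hc] at hc0
    obtain ⟨h1, -⟩ := hind 1 r (one_pow q) hrq
      (by rw [hxry]; linear_combination r * y * h2)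
      (by linear_combination hc0)
    exact one_ne_zero h1
  · -- r ∉ F_q
    have hcne : c ≠ 0 := by
      intro h
      rw [h, zero_pow (by omega : q + 1 ≠ 0)] at hkey
      exact hrq (by linear_combination hkey - r * h2)
    by_cases hy0' : y0 = 0
    · -- trace-style argument
      have hcq : c ^ q = c := by
        rw [hc, hy0']
        rw [φadd, mul_pow, hx0, zero_pow hq0]
        ring
      have ht : (c ^ (q + 1)) ^ q = c ^ (q + 1) := by
        rw [← pow_mul, mul_comm, pow_mul, hcq]
      set t : F := c ^ (q + 1) with htd
      clear_value t
      have hrqt : r ^ q = r + t := by linear_combination hkey - r * h2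
      have hrq2 : r ^ q ^ 2 = r := by
        have h5 : r ^ q ^ 2 = (r ^ q) ^ q := by rw [← pow_mul, pow_two]
        rw [h5, hrqt, φadd, ht, hrqt]
        linear_combination t * h2
      have haux : ∀ m : ℕ, r ^ q ^ (2 * m + 1) = r ^ q := by
        intro m
        induction m with
        | zero => norm_num
        | succ m ih =>
          have he : 2 * (m + 1) + 1 = (2 * m + 1) + 2 := by ring
          rw [he, pow_add, pow_mul, ih, ← pow_mul, mul_comm q (q ^ 2), pow_mul,
            hrq2]
      obtain ⟨m, hm⟩ := hn
      have h9 := hpn r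
      rw [hm, haux m] at h9
      exact hrq h9
    · -- y0 ≠ 0
      have hy0r : y0 * r = c + x0 := by rw [hc]; linear_combination (-x0) * h2
      have hy0rq : y0 * r ^ q = c ^ q + x0 := by
        have h6 : (y0 * r) ^ q = (c + x0) ^ q := by rw [hy0r]
        rw [mul_pow, hy0, φadd, hx0] at h6
        exact h6
      have hc' : c ^ q + c = y0 * c ^ (q + 1) := by
        have h5 : y0 * (r ^ q + r) = c ^ q + c := by
          rw [mul_add, hy0rq, hy0r]; linear_combination x0 * h2
        rw [← h5, hkey]
      set d : F := y0 * c with hd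
      clear_value d
      have hdne : d ≠ 0 := by rw [hd]; exact mul_ne_zero hy0' hcne
      have hy0q1 : y0 ^ (q + 1) = y0 * y0 := by rw [pow_succ, hy0]
      have hdd : d ^ (q + 1) = d ^ q + d := by
        rw [hd, mul_pow, mul_pow, hy0q1, hy0]
        linear_combination (-y0) * hc'
      have hene : d + 1 ≠ 0 := by
        intro h
        have hd1 : d = 1 := by linear_combination h - h2
        rw [hd1, one_pow, one_pow] at hdd
        exact one_ne_zero (by linear_combination hdd + h2)
      have he1 : (d + 1) ^ (q + 1) = 1 := by
        have hdqd : d ^ q * d = d ^ q + d := by rw [← pow_succ]; exact hdd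
        rw [pow_succ, φadd, one_pow]
        linear_combination hdqd + (d ^ q + d) * h2
      have hqn1 : 1 ≤ q ^ n := Nat.one_le_pow _ _ (by omega)
      have hepow : (d + 1) ^ (q ^ n - 1) = 1 := by
        have h7 : (d + 1) ^ (q ^ n - 1) * (d + 1) = 1 * (d + 1) := by
          rw [one_mul, ← pow_succ, Nat.sub_add_cancel hqn1, hpn]
        exact mul_right_cancel₀ hene h7
      have hqe : q % 2 = 0 := by
        have h8 : (2 : ℕ) ∣ q := by rw [hq]; exact dvd_pow_self 2 (by omega)
        omega
      have hgcd : Nat.gcd (q + 1) (q ^ n - 1) = 1 := by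
        have hdvd1 : q + 1 ∣ q ^ n + 1 := by
          simpa using hn.nat_add_dvd_pow_add_pow q 1
        have hga : Nat.gcd (q + 1) (q ^ n - 1) ∣ q + 1 := Nat.gcd_dvd_left _ _
        have hgb : Nat.gcd (q + 1) (q ^ n - 1) ∣ q ^ n - 1 := Nat.gcd_dvd_right _ _
        have hg2 : Nat.gcd (q + 1) (q ^ n - 1) ∣ 2 := by
          have h9 := Nat.dvd_sub (hga.trans hdvd1) hgb
          have h10 : (q ^ n + 1) - (q ^ n - 1) = 2 := by omega
          rwa [h10] at h9
        rcases (Nat.dvd_prime Nat.prime_two).mp hg2 with h | h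
        · exact h
        · exfalso
          obtain ⟨cc, hcc⟩ := h ▸ hga
          omega
      have horder : orderOf (d + 1) = 1 := by
        have ho1 : orderOf (d + 1) ∣ q + 1 := orderOf_dvd_of_pow_eq_one he1
        have ho2 : orderOf (d + 1) ∣ q ^ n - 1 := orderOf_dvd_of_pow_eq_one hepow
        exact Nat.dvd_one.mp (hgcd ▸ Nat.dvd_gcd ho1 ho2)
      have hE1 : d + 1 = 1 := orderOf_eq_one_iff.mp horder
      exact hdne (by linear_combination hE1)
end

section
/- Let q = 2^k with k odd, n ≥ 3 odd, and α, u ∈ F_{q^n} nonzero. Consider the equation u·y^q + u^q·y + u^(q+1)·y₀² = α in unknowns y ∈ F_{q^n}, y₀ ∈ F_q. Then the solution set {(y,y₀)} equals {(v + λu, v₀) : λ ∈ F_q} for some fixed solution (v, v₀). -/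
open Finset Polynomial

lemma AS_surj (q n : ℕ) (hq2 : 2 ≤ q) (hn : 0 < n)
    (F : Type) [Field F] [Fintype F] (hF : Fintype.card F = q ^ n)
    (hadd : ∀ a b : F, (a + b) ^ q = a ^ q + b ^ q)
    (hself : ∀ a : F, a + a = 0)
    (c : F) (hc : ∑ i ∈ Finset.range n, c ^ q ^ i = 0) :
    ∃ z : F, z ^ q + z = c := by
  classical
  have hq0 : 0 < q := by omega
  have hq1 : 1 < q := hq2
  -- the Artin-Schreier additive map
  have hmapzero : (0 : F) ^ q + 0 = 0 := by
    rw [zero_pow (by omega), add_zero]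
  let φ : F →+ F :=
    { toFun := fun z => z ^ q + z
      map_zero' := hmapzero
      map_add' := fun a b => by
        show (a + b) ^ q + (a + b) = (a ^ q + a) + (b ^ q + b)
        rw [hadd]; ring }
  have hφ : ∀ z : F, φ z = z ^ q + z := fun z => rfl
  -- powers of q also distribute over addition
  have powadd : ∀ (i : ℕ) (a b : F), (a + b) ^ q ^ i = a ^ q ^ i + b ^ q ^ i := by
    intro i
    induction i with
    | zero => intro a b; simp
    | succ i ih =>
        intro a b
        rw [pow_succ, pow_mul, pow_mul, pow_mul, ih, hadd]
  have hqn : ∀ x : F, x ^ q ^ n = x := by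
    intro x; rw [← hF]; exact FiniteField.pow_card x
  -- image of φ lies in the trace-zero set
  have hT0 : ∀ z : F, ∑ i ∈ Finset.range n, (φ z) ^ q ^ i = 0 := by
    intro z
    have h1 : ∀ i : ℕ, (z ^ q + z) ^ q ^ i = z ^ q ^ (i + 1) + z ^ q ^ i := by
      intro i
      rw [powadd, ← pow_mul, ← pow_succ']
    have hshift : ∑ i ∈ Finset.range n, z ^ q ^ (i + 1) = ∑ i ∈ Finset.range n, z ^ q ^ i := by
      have h := Finset.sum_range_succ' (fun i => z ^ q ^ i) n
      have h2 := Finset.sum_range_succ (fun i => z ^ q ^ i) n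
      have h3 : z ^ q ^ n = z ^ q ^ 0 := by rw [hqn, pow_zero, pow_one]
      rw [h2, h3] at h
      exact add_right_cancel h.symm
    calc ∑ i ∈ Finset.range n, (φ z) ^ q ^ i
        = ∑ i ∈ Finset.range n, (z ^ q ^ (i + 1) + z ^ q ^ i) := by
          refine Finset.sum_congr rfl fun i _ => ?_
          rw [hφ, h1]
      _ = (∑ i ∈ Finset.range n, z ^ q ^ (i + 1)) + ∑ i ∈ Finset.range n, z ^ q ^ i := by
          rw [Finset.sum_add_distrib]
      _ = 0 := by rw [hshift]; exact hself _
  -- kernel bound via the polynomial X^q + X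
  set Kf : Finset F := Finset.univ.filter (fun z : F => z ^ q + z = 0) with hKf
  have hKcard : Kf.card ≤ q := by
    set P1 : F[X] := X ^ q + X with hP1
    have hco : P1.coeff q = 1 := by
      rw [hP1, coeff_add, coeff_X_pow, if_pos rfl, coeff_X, if_neg (by omega), add_zero]
    have hP1ne : P1 ≠ 0 := fun h => by simp [h] at hco
    have hdeg : P1.natDegree ≤ q := by
      refine le_trans (natDegree_add_le _ _) ?_
      simp [natDegree_X_pow, natDegree_X]
      omega
    have hsub : Kf ⊆ P1.roots.toFinset := by
      intro z hz
      rw [hKf, Finset.mem_filter] at hz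
      rw [Multiset.mem_toFinset, mem_roots hP1ne]
      simp [hP1, IsRoot, hz.2]
    calc Kf.card ≤ P1.roots.toFinset.card := Finset.card_le_card hsub
      _ ≤ Multiset.card P1.roots := Multiset.toFinset_card_le _
      _ ≤ P1.natDegree := P1.card_roots'
      _ ≤ q := hdeg
  -- counting: card of range
  have hker : Nat.card φ.ker = Kf.card := by
    rw [Nat.card_eq_fintype_card]
    rw [hKf, ← Fintype.card_subtype]
    exact Fintype.card_congr (Equiv.subtypeEquivRight fun z => by
      simp [AddMonoidHom.mem_ker, hφ])
  have hcardF : Nat.card F = q ^ n := by rw [Nat.card_eq_fintype_card, hF]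
  have hsplit : Nat.card F = Nat.card (F ⧸ φ.ker) * Nat.card φ.ker :=
    AddSubgroup.card_eq_card_quotient_mul_card_addSubgroup φ.ker
  have hquot : Nat.card (F ⧸ φ.ker) = Nat.card φ.range :=
    Nat.card_congr (QuotientAddGroup.quotientKerEquivRange φ).toEquiv
  set Rf : Finset F := Finset.univ.filter (fun x : F => ∃ z : F, z ^ q + z = x) with hRf
  have hrange : Nat.card φ.range = Rf.card := by
    rw [Nat.card_eq_fintype_card, hRf, ← Fintype.card_subtype]
    exact Fintype.card_congr (Equiv.subtypeEquivRight fun x => by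
      simp [AddMonoidHom.mem_range, hφ, eq_comm])
  have hRcard : q ^ (n - 1) ≤ Rf.card := by
    have h1 : q ^ n = Rf.card * Kf.card := by
      rw [← hker, ← hrange, ← hquot, ← hsplit, hcardF]
    have h2 : q ^ (n - 1) * q ≤ Rf.card * q := by
      calc q ^ (n - 1) * q = q ^ n := by
            rw [← pow_succ]; congr 1; omega
        _ = Rf.card * Kf.card := h1
        _ ≤ Rf.card * q := Nat.mul_le_mul_left _ hKcard
    exact Nat.le_of_mul_le_mul_right h2 hq0
  -- trace-zero set bound via the polynomial ∑ X^(q^i)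
  set Sf : Finset F := Finset.univ.filter
      (fun x : F => ∑ i ∈ Finset.range n, x ^ q ^ i = 0) with hSf
  have hScard : Sf.card ≤ q ^ (n - 1) := by
    set P2 : F[X] := ∑ i ∈ Finset.range n, X ^ q ^ i with hP2
    have hco : P2.coeff (q ^ (n - 1)) = 1 := by
      rw [hP2, finset_sum_coeff]
      rw [Finset.sum_eq_single_of_mem (n - 1) (Finset.mem_range.2 (by omega))]
      · rw [coeff_X_pow, if_pos rfl]
      · intro i hi hine
        rw [coeff_X_pow, if_neg]
        intro h
        exact hine (Nat.pow_right_injective hq2 h.symm)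
    have hP2ne : P2 ≠ 0 := fun h => by simp [h] at hco
    have hdeg : P2.natDegree ≤ q ^ (n - 1) := by
      refine natDegree_sum_le_of_forall_le _ _ fun i hi => ?_
      rw [natDegree_X_pow]
      exact Nat.pow_le_pow_right (by omega) (by
        have := Finset.mem_range.1 hi; omega)
    have hsub : Sf ⊆ P2.roots.toFinset := by
      intro x hx
      rw [hSf, Finset.mem_filter] at hx
      rw [Multiset.mem_toFinset, mem_roots hP2ne]
      have : P2.eval x = ∑ i ∈ Finset.range n, x ^ q ^ i := by
        rw [hP2, eval_finset_sum]
        exact Finset.sum_congr rfl fun i _ => by rw [eval_pow, eval_X]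
      rw [IsRoot, this, hx.2]
    calc Sf.card ≤ P2.roots.toFinset.card := Finset.card_le_card hsub
      _ ≤ Multiset.card P2.roots := Multiset.toFinset_card_le _
      _ ≤ P2.natDegree := P2.card_roots'
      _ ≤ q ^ (n - 1) := hdeg
  have hRS : Rf ⊆ Sf := by
    intro x hx
    rw [hRf, Finset.mem_filter] at hx
    obtain ⟨z, hz⟩ := hx.2
    rw [hSf, Finset.mem_filter]
    refine ⟨Finset.mem_univ _, ?_⟩
    have := hT0 z
    rw [hφ, hz] at this
    exact this
  have heq : Rf = Sf :=
    Finset.eq_of_subset_of_card_le hRS (le_trans hScard hRcard)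
  have hcmem : c ∈ Sf := by
    rw [hSf, Finset.mem_filter]; exact ⟨Finset.mem_univ _, hc⟩
  rw [← heq, hRf, Finset.mem_filter] at hcmem
  exact hcmem.2

theorem stmt9 (k n : ℕ) (hk : Odd k) (hn : Odd n) (hn3 : 3 ≤ n)
    (q : ℕ) (hq : q = 2 ^ k)
    (F : Type) [Field F] [Fintype F] (hF : Fintype.card F = q ^ n)
    (α u : F) (hα : α ≠ 0) (hu : u ≠ 0) :
    ∃ v v0 : F, v0 ^ q = v0 ∧
      u * v ^ q + u ^ q * v + u ^ (q + 1) * v0 ^ 2 = α ∧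
      ∀ y y0 : F, y0 ^ q = y0 →
        (u * y ^ q + u ^ q * y + u ^ (q + 1) * y0 ^ 2 = α ↔
          ∃ lam : F, lam ^ q = lam ∧ y = v + lam * u ∧ y0 = v0) := by
  classical
  have hk1 : 1 ≤ k := by
    rcases hk with ⟨m, hm⟩; omega
  have hn1 : 1 ≤ n := by omega
  have hq2 : 2 ≤ q := by
    rw [hq]
    calc 2 = 2 ^ 1 := rfl
    _ ≤ 2 ^ k := Nat.pow_le_pow_right (by omega) hk1
  -- characteristic 2
  have h2F : (2 : F) = 0 := by
    have h1 : ((Fintype.card F : ℕ) : F) = 0 := FiniteField.cast_card_eq_zero F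
    rw [hF, hq] at h1
    have h2 : (2 : F) ^ (k * n) = 0 := by
      rw [← pow_mul] at h1
      exact_mod_cast h1
    exact pow_eq_zero_iff (show k * n ≠ 0 by positivity) |>.1 h2
  haveI hchar : CharP F 2 := (CharP.charP_iff_prime_eq_zero Nat.prime_two).2 (by exact_mod_cast h2F)
  have hself : ∀ a : F, a + a = 0 := fun a => by
    linear_combination a * h2F
  have hadd : ∀ a b : F, (a + b) ^ q = a ^ q + b ^ q := by
    intro a b
    rw [hq]
    exact add_pow_char_pow ..
  have powadd : ∀ (i : ℕ) (a b : F), (a + b) ^ q ^ i = a ^ q ^ i + b ^ q ^ i := by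
    intro i
    induction i with
    | zero => intro a b; simp
    | succ i ih =>
        intro a b
        rw [pow_succ, pow_mul, pow_mul, pow_mul, ih, hadd]
  have hqn : ∀ x : F, x ^ q ^ n = x := by
    intro x; rw [← hF]; exact FiniteField.pow_card x
  set T : F → F := fun x => ∑ i ∈ Finset.range n, x ^ q ^ i with hT
  have Tadd : ∀ a b : F, T (a + b) = T a + T b := by
    intro a b
    simp only [hT]
    rw [← Finset.sum_add_distrib]
    exact Finset.sum_congr rfl fun i _ => powadd i a b
  have sumpow : ∀ (s : Finset ℕ) (g : ℕ → F), (∑ i ∈ s, g i) ^ q = ∑ i ∈ s, g i ^ q := by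
    intro s g
    induction s using Finset.cons_induction with
    | empty => simp [zero_pow (show q ≠ 0 by omega)]
    | cons a s ha ih => rw [Finset.sum_cons, Finset.sum_cons, hadd, ih]
  have Tshift : ∀ x : F, T (x ^ q) = T x := by
    intro x
    simp only [hT]
    have h1 : ∑ i ∈ Finset.range n, (x ^ q) ^ q ^ i = ∑ i ∈ Finset.range n, x ^ q ^ (i + 1) :=
      Finset.sum_congr rfl fun i _ => by rw [← pow_mul, ← pow_succ']
    rw [h1]
    have h := Finset.sum_range_succ' (fun i => x ^ q ^ i) n
    have h2 := Finset.sum_range_succ (fun i => x ^ q ^ i) n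
    have h3 : x ^ q ^ n = x ^ q ^ 0 := by rw [hqn, pow_zero, pow_one]
    rw [h2, h3] at h
    exact add_right_cancel h.symm
  have Tq : ∀ x : F, (T x) ^ q = T x := by
    intro x
    have hs : (T x) ^ q = T (x ^ q) := by
      simp only [hT]
      rw [sumpow]
      exact Finset.sum_congr rfl fun i _ => by rw [← pow_mul, ← pow_mul, mul_comm]
    rw [hs, Tshift]
  have Tfix : ∀ c : F, c ^ q = c → T c = c := by
    intro c hc
    have hpow : ∀ i : ℕ, c ^ q ^ i = c := by
      intro i
      induction i with
      | zero => simp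
      | succ i ih => rw [pow_succ, pow_mul, ih, hc]
    simp only [hT]
    rw [Finset.sum_congr rfl fun i _ => hpow i, Finset.sum_const, Finset.card_range,
      nsmul_eq_mul]
    obtain ⟨m, hm⟩ := hn
    rw [hm]
    push_cast
    rw [h2F]
    ring
  have hu1 : u ^ (q + 1) ≠ 0 := pow_ne_zero _ hu
  set β : F := α * (u ^ (q + 1))⁻¹ with hβ
  set t : F := T β with ht
  have htq : t ^ q = t := Tq β
  have hkn1 : 1 ≤ k * n := by
    have := Nat.mul_le_mul hk1 hn1; omega
  set v0 : F := t ^ 2 ^ (k * n - 1) with hv0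
  have hv0sq : v0 ^ 2 = t := by
    rw [hv0, ← pow_mul]
    have e1 : 2 ^ (k * n - 1) * 2 = 2 ^ (k * n) := by
      rw [← pow_succ]; congr 1; omega
    have e2 : (2 : ℕ) ^ (k * n) = q ^ n := by rw [hq, ← pow_mul]
    rw [e1, e2]
    exact hqn t
  have powcomm : ∀ (a : F) (m l : ℕ), (a ^ m) ^ l = (a ^ l) ^ m := by
    intro a m l
    rw [← pow_mul, mul_comm, pow_mul]
  have sqinj : ∀ a b : F, a ^ 2 = b ^ 2 → a = b := by
    intro a b hab
    have h1 : (a + b) ^ 2 = 0 := by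
      linear_combination hab + (a * b + b ^ 2) * h2F
    have h2 : a + b = 0 := pow_eq_zero_iff (two_ne_zero) |>.1 h1
    linear_combination h2 - b * h2F
  have hv0q : v0 ^ q = v0 := by
    apply sqinj
    calc (v0 ^ q) ^ 2 = (v0 ^ 2) ^ q := powcomm v0 q 2
      _ = t ^ q := by rw [hv0sq]
      _ = t := htq
      _ = v0 ^ 2 := hv0sq.symm
  have hsqfix : ∀ a : F, a ^ q = a → (a ^ 2) ^ q = a ^ 2 := by
    intro a ha
    rw [powcomm, ha]
  have hc : T (β + v0 ^ 2) = 0 := by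
    rw [Tadd, Tfix (v0 ^ 2) (hsqfix v0 hv0q), hv0sq, ← ht]
    exact hself t
  obtain ⟨z, hz⟩ := AS_surj q n hq2 (by omega) F hF hadd hself (β + v0 ^ 2)
    (by simp only [hT] at hc; exact hc)
  have hveq : u * (u * z) ^ q + u ^ q * (u * z) + u ^ (q + 1) * v0 ^ 2 = α := by
    have e1 : u * (u * z) ^ q + u ^ q * (u * z) + u ^ (q + 1) * v0 ^ 2
        = u ^ (q + 1) * ((z ^ q + z) + v0 ^ 2) := by
      rw [mul_pow]; ring
    rw [e1, hz, add_assoc, hself (v0 ^ 2), add_zero, hβ]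
    field_simp
  refine ⟨u * z, v0, hv0q, hveq, ?_⟩
  intro y y0 hy0
  constructor
  · intro heq
    -- first show y0 = v0
    set w : F := y * u⁻¹ with hwdef
    have hwq : w ^ q + w + y0 ^ 2 = β := by
      apply mul_left_cancel₀ hu1
      have expand : u ^ (q + 1) * (w ^ q + w + y0 ^ 2)
          = u * y ^ q + u ^ q * y + u ^ (q + 1) * y0 ^ 2 := by
        rw [hwdef, mul_pow, inv_pow]
        field_simp
        ring
      rw [expand, heq, hβ]
      field_simp
    have hy0v0 : y0 = v0 := by
      apply sqinj
      have h1 : T (w ^ q + w + y0 ^ 2) = t := by rw [hwq]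
      have h2 : T (w ^ q + w + y0 ^ 2) = y0 ^ 2 := by
        rw [Tadd, Tadd, Tshift, Tfix (y0 ^ 2) (hsqfix y0 hy0), hself (T w), zero_add]
      rw [← h2, h1, ← hv0sq]
    have hdiff : u * y ^ q + u ^ q * y = u * (u * z) ^ q + u ^ q * (u * z) := by
      rw [hy0v0] at heq
      linear_combination heq - hveq
    refine ⟨(y + u * z) * u⁻¹, ?_, ?_, hy0v0⟩
    · apply mul_left_cancel₀ hu1
      have e1 : u ^ (q + 1) * ((y + u * z) * u⁻¹) ^ q = u * (y ^ q + u ^ q * z ^ q) := by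
        rw [mul_pow, inv_pow, hadd, mul_pow]
        field_simp
        ring
      have e2 : u ^ (q + 1) * ((y + u * z) * u⁻¹) = u ^ q * (y + u * z) := by
        field_simp
        ring
      rw [e1, e2]
      linear_combination hdiff + (u ^ (q + 1) * z ^ q - u ^ q * y) * h2F
    · have hlamu : (y + u * z) * u⁻¹ * u = y + u * z := by field_simp
      linear_combination -hlamu - u * z * h2F
  · rintro ⟨lam, hlamq, hy, hy0v⟩
    subst hy
    subst hy0v
    rw [hadd, mul_pow, mul_pow, hlamq]
    linear_combination hveq + lam * u ^ (q + 1) * h2F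
end

section
/- Let q = 2^k with k odd, n ≥ 3 odd. For α ∈ F_{q^n}^×, define B_α as the set of 2-dimensional F_q-subspaces ℓ of V = F_{q^n} ⊕ F_q·w admitting a basis x + x₀w, y + y₀w with (x·y^q + x^q·y) + (x·y₀ + x₀·y)^(q+1) = α. Then every nonzero vector u ∈ F_{q^n} (i.e., with w-coordinate 0) lies in exactly one member of B_α. -/
section Aux

variable {F : Type} [Field F]

lemma pow_qpow_add (q : ℕ) (hqadd : ∀ x y : F, (x+y)^q = x^q + y^q) :
    ∀ (i : ℕ) (x y : F), (x+y)^(q^i) = x^(q^i) + y^(q^i) := by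
  intro i
  induction i with
  | zero => intro x y; simp
  | succ i ih =>
    intro x y
    rw [pow_succ, pow_mul, pow_mul, pow_mul, ih, hqadd]

/-- The "trace" map. -/
def Tr (q n : ℕ) (z : F) : F := ∑ i ∈ Finset.range n, z ^ q ^ i

lemma Tr_add (q n : ℕ) (hqadd : ∀ x y : F, (x+y)^q = x^q + y^q) (x y : F) :
    Tr q n (x + y) = Tr q n x + Tr q n y := by
  unfold Tr
  rw [← Finset.sum_add_distrib]
  exact Finset.sum_congr rfl fun i _ => pow_qpow_add q hqadd i x y

lemma Tr_shift (q n : ℕ) (hqn : ∀ x : F, x ^ q ^ n = x) (z : F) :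
    Tr q n (z ^ q) = Tr q n z := by
  have h1 : Tr q n (z ^ q) = ∑ i ∈ Finset.range n, z ^ q ^ (i + 1) := by
    refine Finset.sum_congr rfl fun i _ => ?_
    rw [← pow_mul, ← pow_succ']
  have e1 := Finset.sum_range_succ' (fun i => z ^ q ^ i) n
  have e2 := Finset.sum_range_succ (fun i => z ^ q ^ i) n
  have : (∑ i ∈ Finset.range n, z ^ q ^ (i+1)) + z ^ q ^ 0 = Tr q n z + z ^ q ^ n := by
    rw [← e1, e2]; rfl
  rw [h1]
  have h0 : z ^ q ^ 0 = z := by simp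
  rw [h0, hqn] at this
  exact add_right_cancel this

lemma Tr_pow_q (q n : ℕ) (hq0 : q ≠ 0) (hqadd : ∀ x y : F, (x+y)^q = x^q + y^q)
    (hqn : ∀ x : F, x ^ q ^ n = x) (z : F) : (Tr q n z) ^ q = Tr q n z := by
  let φ : F →+ F := { toFun := fun x => x ^ q, map_zero' := zero_pow hq0, map_add' := hqadd }
  have hφ : ∀ x : F, φ x = x ^ q := fun _ => rfl
  have : (Tr q n z) ^ q = ∑ i ∈ Finset.range n, (z ^ q ^ i) ^ q := by
    rw [← hφ]
    unfold Tr
    rw [map_sum]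
    exact Finset.sum_congr rfl fun i _ => hφ _
  rw [this]
  have : ∑ i ∈ Finset.range n, (z ^ q ^ i) ^ q = Tr q n (z ^ q) := by
    unfold Tr
    refine Finset.sum_congr rfl fun i _ => ?_
    rw [← pow_mul, ← pow_mul, mul_comm]
  rw [this, Tr_shift q n hqn]

lemma Tr_fix (q n : ℕ) (hodd : Odd n) (h2 : ∀ t : F, t + t = 0)
    (c : F) (hc : c ^ q = c) : Tr q n c = c := by
  have key : ∀ i : ℕ, c ^ q ^ i = c := by
    intro i
    induction i with
    | zero => simp
    | succ i ih => rw [pow_succ, pow_mul, ih, hc]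
  unfold Tr
  rw [Finset.sum_congr rfl fun i _ => key i, Finset.sum_const, Finset.card_range]
  obtain ⟨m, hm⟩ := hodd
  subst hm
  rw [add_nsmul, one_nsmul, mul_comm, mul_nsmul, two_nsmul, h2]
  exact zero_add c


lemma Tr_solvable {F : Type} [Field F] [Fintype F] (q n : ℕ) (hq0 : q ≠ 0)
    (hqadd : ∀ x y : F, (x+y)^q = x^q + y^q) (h2 : ∀ t : F, t + t = 0)
    (hqn : ∀ x : F, x ^ q ^ n = x) (hodd : Odd n)
    (z : F) (hz : Tr q n z = 0) : ∃ s : F, s ^ q + s = z := by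
  classical
  let K : AddSubgroup F :=
    { carrier := {a : F | a ^ q = a}
      zero_mem' := zero_pow hq0
      add_mem' := by
        intro a b ha hb
        simp only [Set.mem_setOf_eq] at *
        rw [hqadd, ha, hb]
      neg_mem' := by
        intro a ha
        simp only [Set.mem_setOf_eq] at *
        rw [neg_eq_of_add_eq_zero_right (h2 a), ha] }
  let L : F →+ F :=
    { toFun := fun s => s ^ q + s
      map_zero' := by simp [zero_pow hq0]
      map_add' := by
        intro a b
        show (a + b) ^ q + (a + b) = (a ^ q + a) + (b ^ q + b)
        rw [hqadd]
        ring }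
  let T : F →+ F :=
    { toFun := fun s => Tr q n s
      map_zero' := by
        have h0 : Tr q n (0 : F) + Tr q n 0 = Tr q n 0 + 0 := by
          rw [← Tr_add q n hqadd, add_zero, add_zero]
        exact add_left_cancel h0
      map_add' := fun a b => Tr_add q n hqadd a b }
  have hLker : L.ker = K := by
    ext s
    simp only [AddMonoidHom.mem_ker]
    constructor
    · intro h
      have h' : s ^ q + s = 0 := h
      have : s ^ q + s + s = 0 + s := by rw [h']
      rw [add_assoc, h2, add_zero, zero_add] at this
      exact this
    · intro h
      show s ^ q + s = 0
      rw [show s ^ q = s from h]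
      exact h2 s
  have hTrange : T.range = K := by
    apply le_antisymm
    · rintro _ ⟨s, rfl⟩
      exact Tr_pow_q q n hq0 hqadd hqn s
    · intro c hc
      exact ⟨c, (Tr_fix q n hodd h2 c hc)⟩
  have hLT : L.range ≤ T.ker := by
    rintro _ ⟨s, rfl⟩
    show Tr q n (s ^ q + s) = 0
    rw [Tr_add q n hqadd, Tr_shift q n hqn]
    exact h2 _
  have hcard1 : Nat.card F = Nat.card L.range * Nat.card K := by
    have h1 := AddSubgroup.card_eq_card_quotient_mul_card_addSubgroup L.ker
    have hq1 : Nat.card (F ⧸ L.ker) = Nat.card L.range :=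
      Nat.card_congr (QuotientAddGroup.quotientKerEquivRange L).toEquiv
    rw [hq1, hLker] at h1
    exact h1
  have hcard2 : Nat.card F = Nat.card K * Nat.card T.ker := by
    have h1 := AddSubgroup.card_eq_card_quotient_mul_card_addSubgroup T.ker
    have hq1 : Nat.card (F ⧸ T.ker) = Nat.card K := by
      rw [← hTrange]
      exact Nat.card_congr (QuotientAddGroup.quotientKerEquivRange T).toEquiv
    rw [hq1] at h1
    exact h1
  have hKpos : 0 < Nat.card K := Nat.card_pos
  have hcards : Nat.card T.ker = Nat.card L.range := by
    have h3 : Nat.card L.range * Nat.card K = Nat.card T.ker * Nat.card K := by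
      rw [← hcard1, hcard2, mul_comm]
    exact (Nat.eq_of_mul_eq_mul_right hKpos h3).symm
  have heq : L.range = T.ker := by
    have hsub : (L.range : Set F) ⊆ (T.ker : Set F) := hLT
    have hfin : (T.ker : Set F).Finite := Set.toFinite _
    have hc : ((T.ker : Set F)).ncard ≤ ((L.range : Set F)).ncard := by
      rw [← Nat.card_coe_set_eq, ← Nat.card_coe_set_eq]
      exact hcards.le
    exact SetLike.coe_injective (Set.eq_of_subset_of_ncard_le hsub hc hfin)
  have hzmem : z ∈ T.ker := hz
  rw [← heq] at hzmem
  obtain ⟨s, hs⟩ := hzmem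
  exact ⟨s, hs⟩

end Aux

section Span

variable {F : Type} [Field F]

lemma span_sub (q : ℕ) (hqadd : ∀ x y : F, (x+y)^q = x^q + y^q)
    (a b c d x x0 y y0 : F) (ha : a^q = a) (hb : b^q = b) (hc : c^q = c) (hd : d^q = d) :
    lineSpan q (a*x+b*y, a*x0+b*y0) (c*x+d*y, c*x0+d*y0) ⊆ lineSpan q (x, x0) (y, y0) := by
  rintro p ⟨a', b', ha', hb', rfl⟩
  refine ⟨a'*a + b'*c, a'*b + b'*d, ?_, ?_, ?_⟩
  · rw [hqadd, mul_pow, mul_pow, ha', ha, hb', hc]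
  · rw [hqadd, mul_pow, mul_pow, ha', hb, hb', hd]
  · simp only [Prod.mk.injEq]
    constructor <;> ring

lemma span_eq (q : ℕ) (hqadd : ∀ x y : F, (x+y)^q = x^q + y^q) (h2 : ∀ t : F, t + t = 0)
    (a b c d x x0 y y0 : F) (ha : a^q = a) (hb : b^q = b) (hc : c^q = c) (hd : d^q = d)
    (he : a*d + b*c = 1) :
    lineSpan q (a*x+b*y, a*x0+b*y0) (c*x+d*y, c*x0+d*y0) = lineSpan q (x, x0) (y, y0) := by
  apply Set.Subset.antisymm (span_sub q hqadd a b c d x x0 y y0 ha hb hc hd)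
  have hrev := span_sub q hqadd d b c a (a*x+b*y) (a*x0+b*y0) (c*x+d*y) (c*x0+d*y0) hd hb hc ha
  have e1 : d*(a*x+b*y) + b*(c*x+d*y) = x := by
    linear_combination x * he + h2 (b*d*y)
  have e2 : d*(a*x0+b*y0) + b*(c*x0+d*y0) = x0 := by
    linear_combination x0 * he + h2 (b*d*y0)
  have e3 : c*(a*x+b*y) + a*(c*x+d*y) = y := by
    linear_combination y * he + h2 (a*c*x)
  have e4 : c*(a*x0+b*y0) + a*(c*x0+d*y0) = y0 := by
    linear_combination y0 * he + h2 (a*c*x0)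
  rw [e1, e2, e3, e4] at hrev
  exact hrev

lemma Dform_change (q : ℕ) (hqadd : ∀ x y : F, (x+y)^q = x^q + y^q) (h2 : ∀ t : F, t + t = 0)
    (a b c d x x0 y y0 : F) (ha : a^q = a) (hb : b^q = b) (hc : c^q = c) (hd : d^q = d)
    (he : a*d + b*c = 1) :
    Dform q (a*x+b*y) (a*x0+b*y0) (c*x+d*y) (c*x0+d*y0) = Dform q x x0 y y0 := by
  have hXq : (a*x+b*y)^q = a*x^q + b*y^q := by rw [hqadd, mul_pow, mul_pow, ha, hb]
  have hYq : (c*x+d*y)^q = c*x^q + d*y^q := by rw [hqadd, mul_pow, mul_pow, hc, hd]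
  have hinner : (a*x+b*y)*(c*x0+d*y0) + (a*x0+b*y0)*(c*x+d*y) = x*y0 + x0*y := by
    linear_combination (x*y0 + x0*y) * he + h2 (a*c*(x*x0)) + h2 (b*d*(y*y0))
  unfold Dform
  rw [hXq, hYq, hinner]
  linear_combination (x*y^q + x^q*y) * he + h2 (a*c*(x*x^q)) + h2 (b*d*(y*y^q))

end Span


theorem stmt10 (k n : ℕ) (hk : Odd k) (hn : Odd n) (hn3 : 3 ≤ n)
    (q : ℕ) (hq : q = 2 ^ k)
    (F : Type) [Field F] [Fintype F] (hF : Fintype.card F = q ^ n)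
    (α : F) (hα : α ≠ 0) (u : F) (hu : u ≠ 0) :
    ∃! ℓ : Set (F × F), ℓ ∈ Bset q α ∧ ((u, (0 : F)) ∈ ℓ) := by
  have hk0 : k ≠ 0 := by rintro rfl; simp [Nat.odd_iff] at hk
  have hn0 : n ≠ 0 := by omega
  have hq0 : q ≠ 0 := by subst hq; positivity
  -- characteristic 2
  have hcard2 : Fintype.card F = 2 ^ (k * n) := by
    rw [hF, hq, ← pow_mul]
  have hp2 : ringChar F = 2 := by
    obtain ⟨m, hprime, hcard⟩ := FiniteField.card F (ringChar F)
    have hdvd : ringChar F ∣ 2 ^ (k * n) := by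
      rw [← hcard2, hcard]
      exact dvd_pow_self _ m.2.ne'
    have := Nat.Prime.dvd_of_dvd_pow hprime hdvd
    exact (Nat.prime_dvd_prime_iff_eq hprime Nat.prime_two).mp this
  haveI hC : CharP F 2 := hp2 ▸ ringChar.charP F
  haveI : Fact (Nat.Prime 2) := ⟨Nat.prime_two⟩
  have h2 : ∀ t : F, t + t = 0 := by
    intro t
    have h20 : (2 : F) = 0 := by exact_mod_cast CharP.cast_eq_zero F 2
    rw [← two_mul, h20, zero_mul]
  have hqadd : ∀ x y : F, (x+y)^q = x^q + y^q := by
    intro x y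
    rw [hq]
    exact add_pow_char_pow x y 2 k
  have hqn : ∀ x : F, x ^ q ^ n = x := by
    intro x
    rw [← hF]
    exact FiniteField.pow_card x
  have hmulK : ∀ a b : F, a^q = a → b^q = b → (a*b)^q = a*b := by
    intro a b ha hb; rw [mul_pow, ha, hb]
  have hinvK : ∀ a : F, a^q = a → (a⁻¹)^q = a⁻¹ := by
    intro a ha; rw [inv_pow, ha]
  -- square roots in the fixed field
  have hsqrt : ∀ c : F, c^q = c → ∃ d : F, d^q = d ∧ d*d = c := by
    intro c hc
    refine ⟨c ^ (2 ^ (k*n - 1)), ?_, ?_⟩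
    · rw [← pow_mul, mul_comm, pow_mul, hc]
    · obtain ⟨m', hm'⟩ : ∃ m', k*n = m'+1 :=
        ⟨k*n - 1, by have : k*n ≠ 0 := Nat.mul_ne_zero hk0 hn0; omega⟩
      rw [← pow_add]
      have hexp : 2^(k*n-1) + 2^(k*n-1) = 2^(k*n) := by
        rw [hm']
        simp [pow_succ]
        ring
      rw [hexp]
      have : (2:ℕ)^(k*n) = q^n := by rw [hq, pow_mul]
      rw [this]
      exact hqn c
  have hsqinj : ∀ a b : F, a*a = b*b → a = b := by
    intro a b hab
    have h0 : (a+b)*(a+b) = 0 := by linear_combination hab + h2 (a*b) + h2 (b*b)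
    have h0' : a + b = 0 := mul_self_eq_zero.mp h0
    linear_combination h0' - h2 b
  -- setup
  set U : F := u ^ (q+1) with hU
  have hUne : U ≠ 0 := pow_ne_zero _ hu
  set β : F := α * U⁻¹ with hβ
  have hβne : β ≠ 0 := mul_ne_zero hα (inv_ne_zero hUne)
  have hcK := Tr_pow_q q n hq0 hqadd hqn β
  obtain ⟨d, hdK, hdd⟩ := hsqrt (Tr q n β) hcK
  have hTz : Tr q n (β + d*d) = 0 := by
    rw [Tr_add q n hqadd, Tr_fix q n hn h2 (d*d) (hmulK d d hdK hdK), hdd]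
    exact h2 _
  obtain ⟨s, hs⟩ := Tr_solvable q n hq0 hqadd h2 hqn hn (β + d*d) hTz
  set ℓ0 : Set (F × F) := lineSpan q (u, (0:F)) (s*u, d) with hℓ0
  -- evaluation of Dform on lines through (u,0)
  have hDeval : ∀ τ v0 : F, v0^q = v0 → Dform q u 0 (τ*u) v0 = U * (τ^q + τ + v0*v0) := by
    intro τ v0 hv0
    unfold Dform
    rw [mul_pow]
    rw [show u*v0 + 0*(τ*u) = u*v0 from by ring]
    rw [mul_pow, pow_succ v0, hv0, hU, pow_succ u]
    ring
  have hDcand : Dform q u 0 (s*u) d = α := by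
    rw [hDeval s d hdK]
    rw [show s^q + s + d*d = β from by linear_combination hs + h2 (d*d)]
    rw [hβ]
    field_simp
  have hind : IndepPair q u 0 (s*u) d := by
    intro a b ha hb h1 h2'
    have hbd : b * d = 0 := by linear_combination h2'
    by_cases hb0 : b = 0
    · subst hb0
      have hau : a * u = 0 := by linear_combination h1
      exact ⟨(mul_eq_zero.mp hau).resolve_right hu, rfl⟩
    · exfalso
      have hd0 : d = 0 := (mul_eq_zero.mp hbd).resolve_left hb0
      have h3 : a + b*s = 0 := by
        have hcomb : (a + b*s) * u = 0 := by linear_combination h1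
        exact (mul_eq_zero.mp hcomb).resolve_right hu
      have hbs : b * s = a := by linear_combination h3 - h2 a
      have hsa : s = b⁻¹ * a := by field_simp; linear_combination hbs
      have hsK : s^q = s := by
        rw [hsa]; exact hmulK _ _ (hinvK b hb) ha
      have h4 : s^q + s = 0 := by rw [hsK]; exact h2 s
      apply hβne
      rw [hd0] at hs
      linear_combination h4 - hs
  have humem0 : (u, (0:F)) ∈ ℓ0 := by
    refine ⟨1, 0, one_pow q, zero_pow hq0, ?_⟩
    simp
  have hmemB : ℓ0 ∈ Bset q α :=
    ⟨u, 0, s*u, d, zero_pow hq0, hdK, hind, rfl, hDcand⟩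
  -- master uniqueness step
  have hfinal : ∀ v v0 : F, v0^q = v0 → Dform q u 0 v v0 = α →
      lineSpan q (u, (0:F)) (v, v0) = ℓ0 := by
    intro v v0 hv0 hD
    set τ : F := v * u⁻¹ with hτ
    have hv : v = τ * u := by rw [hτ]; exact (inv_mul_cancel_right₀ hu v).symm
    rw [hv, hDeval τ v0 hv0] at hD
    have hβv : τ^q + τ + v0*v0 = β := by
      apply mul_left_cancel₀ hUne
      rw [hD, hβ]
      field_simp
    have hTβ : Tr q n β = v0 * v0 := by
      rw [← hβv]
      rw [show τ^q + τ + v0*v0 = (τ^q + τ) + v0*v0 from by ring]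
      rw [Tr_add q n hqadd, Tr_add q n hqadd, Tr_shift q n hqn,
        Tr_fix q n hn h2 _ (hmulK v0 v0 hv0 hv0), h2, zero_add]
    have hv0d : v0 = d := hsqinj v0 d (by rw [hdd]; exact hTβ.symm)
    rw [hv0d] at hβv
    have hτs : (τ + s)^q = τ + s := by
      rw [hqadd]
      linear_combination hβv + hs - h2 τ - h2 s + h2 β
    set e : F := τ + s with he_def
    have happ := span_eq q hqadd h2 1 0 e 1 u 0 (s*u) d (one_pow q) (zero_pow hq0)
      hτs (one_pow q) (by ring)
    have hpair1 : ((1*u + 0*(s*u) : F), (1*0 + 0*d : F)) = ((u:F), (0:F)) := by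
      norm_num
    have hpair2 : ((e*u + 1*(s*u) : F), (e*0 + 1*d : F)) = ((v:F), (v0:F)) := by
      simp only [Prod.mk.injEq]
      constructor
      · rw [hv]
        linear_combination (u : F) * he_def + h2 (s*u)
      · rw [hv0d]
        ring
    rw [hpair1, hpair2] at happ
    rw [hℓ0, ← happ]
  refine ⟨ℓ0, ⟨hmemB, humem0⟩, ?_⟩
  rintro ℓ ⟨⟨x, x0, y, y0, hx0, hy0, hindep, rfl, hD⟩, humem⟩
  obtain ⟨a, b, ha, hb, hp⟩ := humem
  simp only [Prod.mk.injEq] at hp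
  obtain ⟨hu1, hu2⟩ := hp
  obtain ⟨c', d', hc', hd', hdet⟩ : ∃ c' d' : F, c'^q = c' ∧ d'^q = d' ∧ a*d' + b*c' = 1 := by
    by_cases hb0 : b = 0
    · have ha0 : a ≠ 0 := by
        rintro rfl
        rw [hb0] at hu1
        simp at hu1
        exact hu hu1
      exact ⟨0, a⁻¹, zero_pow hq0, hinvK a ha, by field_simp [hb0]; ring⟩
    · exact ⟨b⁻¹, 0, hinvK b hb, zero_pow hq0, by field_simp; ring⟩
  have hspan := span_eq q hqadd h2 a b c' d' x x0 y y0 ha hb hc' hd' hdet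
  have hDch := Dform_change q hqadd h2 a b c' d' x x0 y y0 ha hb hc' hd' hdet
  have hv0K : (c'*x0 + d'*y0)^q = c'*x0 + d'*y0 := by
    rw [hqadd, mul_pow, mul_pow, hc', hx0, hd', hy0]
  have hD2 : Dform q u 0 (c'*x + d'*y) (c'*x0 + d'*y0) = α := by
    rw [hu1, hu2]
    exact hDch.trans hD
  have hpair : ((a*x+b*y : F), (a*x0+b*y0 : F)) = ((u:F), (0:F)) := by
    rw [← hu1, ← hu2]
  rw [hpair] at hspan
  rw [← hspan]
  exact hfinal _ _ hv0K hD2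
end

section
/- Let q = 2^k with k odd, n ≥ 3 odd, α ∈ F_{q^n}^×, and u ∈ F_{q^n}. Then the vector u + w lies in exactly one member of B_α, namely the span of u + w and y, where y = (u^(q+1) + α)^(1/(q+1)) + u. -/
lemma spanEq {F : Type} [Field F] (q : ℕ) (h2 : (2:F) = 0)
    (hFr : ∀ x y : F, (x+y)^q = x^q+y^q) (x x0 y y0 a b c d : F)
    (ha : a^q=a) (hb : b^q=b) (hc : c^q=c) (hd : d^q=d) (hdet : a*d+b*c=1) :
    lineSpan q (a*x+b*y, a*x0+b*y0) (c*x+d*y, c*x0+d*y0) = lineSpan q (x,x0) (y,y0) := by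
  ext p
  constructor
  · rintro ⟨s, t, hs, ht, rfl⟩
    refine ⟨s*a+t*c, s*b+t*d, ?_, ?_, ?_⟩
    · rw [hFr, mul_pow, mul_pow, hs, ha, ht, hc]
    · rw [hFr, mul_pow, mul_pow, hs, hb, ht, hd]
    · simp only [Prod.mk.injEq]
      exact ⟨by ring, by ring⟩
  · rintro ⟨s, t, hs, ht, rfl⟩
    refine ⟨s*d+t*c, s*b+t*a, ?_, ?_, ?_⟩
    · rw [hFr, mul_pow, mul_pow, hs, hd, ht, hc]
    · rw [hFr, mul_pow, mul_pow, hs, hb, ht, ha]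
    · simp only [Prod.mk.injEq]
      constructor
      · linear_combination (-(s*x)-(t*y))*hdet + (-(t*a*c*x) - s*b*d*y)*h2
      · linear_combination (-(s*x0)-(t*y0))*hdet + (-(t*a*c*x0) - s*b*d*y0)*h2

lemma DformEq {F : Type} [Field F] (q : ℕ) (h2 : (2:F) = 0)
    (hFr : ∀ x y : F, (x+y)^q = x^q+y^q) (x x0 y y0 a b c d : F)
    (ha : a^q=a) (hb : b^q=b) (hc : c^q=c) (hd : d^q=d) (hdet : a*d+b*c=1) :
    Dform q (a*x+b*y) (a*x0+b*y0) (c*x+d*y) (c*x0+d*y0) = Dform q x x0 y y0 := by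
  unfold Dform
  have e1 : (c*x+d*y)^q = c*x^q+d*y^q := by rw [hFr, mul_pow, mul_pow, hc, hd]
  have e2 : (a*x+b*y)^q = a*x^q+b*y^q := by rw [hFr, mul_pow, mul_pow, ha, hb]
  have e3 : (a*x+b*y)*(c*x0+d*y0) + (a*x0+b*y0)*(c*x+d*y) = x*y0+x0*y := by
    linear_combination (x*y0+x0*y)*hdet + (a*c*x*x0 + b*d*y*y0)*h2
  rw [e1, e2, e3]
  linear_combination (x*y^q+x^q*y)*hdet + (a*c*x*x^q+b*d*y*y^q)*h2

lemma Dcomp {F : Type} [Field F] (q : ℕ) (h2 : (2:F) = 0)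
    (hFr : ∀ x y : F, (x+y)^q = x^q+y^q) (u v : F) :
    Dform q u 1 v 0 = (v+u)^(q+1) + u^(q+1) := by
  unfold Dform
  have e : u*0+1*v = v := by ring
  rw [e, pow_succ, pow_succ, pow_succ, hFr]
  linear_combination (-(u^q*u))*h2

theorem stmt11 (k n : ℕ) (hk : Odd k) (hn : Odd n) (hn3 : 3 ≤ n)
    (q : ℕ) (hq : q = 2 ^ k)
    (F : Type) [Field F] [Fintype F] (hF : Fintype.card F = q ^ n)
    (α : F) (hα : α ≠ 0) (u : F) :
    (∃! ℓ : Set (F × F), ℓ ∈ Bset q α ∧ ((u, (1 : F)) ∈ ℓ)) ∧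
    (∀ z : F, z ^ (q + 1) = u ^ (q + 1) + α →
      ∀ ℓ : Set (F × F), ℓ ∈ Bset q α → ((u, (1 : F)) ∈ ℓ) →
        ℓ = lineSpan q (u, (1 : F)) (z + u, (0 : F))) := by
  have hk1 : 1 ≤ k := hk.pos
  have hq2 : 2 ≤ q := by rw [hq]; calc 2 = 2^1 := (pow_one 2).symm
                                     _ ≤ 2^k := Nat.pow_le_pow_right (by norm_num) hk1
  have hq0 : q ≠ 0 := by omega
  -- characteristic 2
  have hcard : Fintype.card F = 2^(k*n) := by rw [hF, hq, ← pow_mul]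
  have hkn : k*n ≠ 0 := by positivity
  haveI : Fact (Nat.Prime 2) := ⟨Nat.prime_two⟩
  have hdvd2 : (2:ℕ) ∣ Fintype.card F := hcard ▸ dvd_pow_self 2 hkn
  have hrc : (2:ℕ) ∣ ringChar F := (prime_dvd_char_iff_dvd_card 2).mpr hdvd2
  have hprime : (ringChar F).Prime := CharP.char_is_prime F _
  have hrc2 : ringChar F = 2 :=
    ((Nat.prime_dvd_prime_iff_eq Nat.prime_two hprime).mp hrc).symm
  haveI char2 : CharP F 2 := hrc2 ▸ ringChar.charP F
  have h2 : (2:F) = 0 := by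
    have := CharP.cast_eq_zero F 2
    exact_mod_cast this
  have hFr : ∀ x y : F, (x+y)^q = x^q+y^q := by
    intro x y; rw [hq]; exact add_pow_char_pow x y 2 k
  -- coprimality and injectivity of (q+1)-power map
  have hqn1 : 1 ≤ q^n := Nat.one_le_pow _ _ (by omega)
  have hdvdq : (q+1) ∣ (q^n + 1) := by
    simpa using hn.nat_add_dvd_pow_add_pow q 1
  have hqodd : ¬ (2 ∣ (q+1)) := by
    have : 2 ∣ q := by rw [hq]; exact dvd_pow_self 2 (by omega)
    omega
  have hcop : Nat.Coprime (q+1) (q^n - 1) := by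
    have hg1 : Nat.gcd (q+1) (q^n-1) ∣ q^n + 1 :=
      dvd_trans (Nat.gcd_dvd_left _ _) hdvdq
    have hg2 : Nat.gcd (q+1) (q^n-1) ∣ q^n - 1 := Nat.gcd_dvd_right _ _
    have hg3 : Nat.gcd (q+1) (q^n-1) ∣ 2 := by
      have := Nat.dvd_sub hg1 hg2
      have he : q^n + 1 - (q^n - 1) = 2 := by omega
      rwa [he] at this
    have hg4 : Nat.gcd (q+1) (q^n-1) ∣ q + 1 := Nat.gcd_dvd_left _ _
    rcases (Nat.dvd_prime Nat.prime_two).mp hg3 with h | h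
    · exact h
    · exact absurd (h ▸ hg4) hqodd
  have hinj : ∀ x y : F, x^(q+1) = y^(q+1) → x = y := by
    intro x y h
    by_cases hy : y = 0
    · subst hy
      rw [zero_pow (by omega), pow_eq_zero_iff (by omega : q+1 ≠ 0)] at h
      rw [h]
    · have hx : x ≠ 0 := by
        intro hx; rw [hx, zero_pow (by omega : q+1 ≠ 0)] at h
        exact hy (pow_eq_zero_iff (by omega : q+1 ≠ 0) |>.mp h.symm)
      have ht1 : (x*y⁻¹)^(q+1) = 1 := by
        rw [mul_pow, h, inv_pow, mul_inv_cancel₀ (pow_ne_zero _ hy)]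
      set t : Fˣ := Units.mk0 (x*y⁻¹) (mul_ne_zero hx (inv_ne_zero hy)) with htdef
      have ht : t^(q+1) = 1 := by
        ext
        push_cast
        exact ht1
      have ho1 : orderOf t ∣ q+1 := orderOf_dvd_of_pow_eq_one ht
      have ho2 : orderOf t ∣ q^n - 1 := by
        have h' := orderOf_dvd_natCard t
        rwa [Nat.card_units, Nat.card_eq_fintype_card, hF] at h'
      have ho : orderOf t = 1 := Nat.eq_one_of_dvd_one (Nat.dvd_gcd ho1 ho2 |>.trans hcop.dvd)
      have : t = 1 := orderOf_eq_one_iff.mp ho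
      have hxy : x * y⁻¹ = 1 := by
        have := congrArg Units.val this
        simpa [htdef] using this
      exact (mul_inv_eq_one₀ hy).mp hxy
  -- choose z
  obtain ⟨z, hz⟩ : ∃ z : F, z^(q+1) = u^(q+1) + α :=
    (Finite.injective_iff_surjective.mp (fun a b hab => hinj a b hab)) (u^(q+1) + α)
  have hzu : z + u ≠ 0 := by
    intro h
    apply hα
    have hzeq : z = u := by linear_combination h - u*h2
    have := hz
    rw [hzeq] at this
    exact left_eq_add.mp this
  have hmem0 : (u, (1:F)) ∈ lineSpan q (u,(1:F)) (z+u, (0:F)) :=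
    ⟨1, 0, one_pow q, zero_pow hq0, by simp⟩
  have hB0 : lineSpan q (u,(1:F)) (z+u,(0:F)) ∈ Bset q α := by
    refine ⟨u, 1, z+u, 0, one_pow q, zero_pow hq0, ?_, rfl, ?_⟩
    · intro a b haq hbq h1' h2'
      have ha0 : a = 0 := by simpa using h2'
      subst ha0
      have hb' : b * (z+u) = 0 := by simpa using h1'
      rcases mul_eq_zero.mp hb' with hb0 | hc0
      · exact ⟨rfl, hb0⟩
      · exact absurd hc0 hzu
    · rw [Dcomp q h2 hFr]
      have he : (z+u)+u = z := by linear_combination u*h2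
      rw [he, hz]
      linear_combination u^(q+1)*h2
  have key : ∀ ℓ : Set (F × F), ℓ ∈ Bset q α → (u,(1:F)) ∈ ℓ →
      ℓ = lineSpan q (u,(1:F)) (z+u,(0:F)) := by
    intro ℓ hB hp
    obtain ⟨x, x0, y, y0, hx0, hy0, hind, hleq, hD⟩ := hB
    rw [hleq] at hp
    obtain ⟨a, b, haq, hbq, hpe⟩ := hp
    simp only [Prod.mk.injEq] at hpe
    obtain ⟨hu, h1⟩ := hpe
    have hdet : a*x0 + b*y0 = 1 := h1.symm
    have hspan := spanEq q h2 hFr x x0 y y0 a b y0 x0 haq hbq hy0 hx0 hdet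
    have hDv := DformEq q h2 hFr x x0 y y0 a b y0 x0 haq hbq hy0 hx0 hdet
    have h00 : y0*x0 + x0*y0 = 0 := by linear_combination x0*y0*h2
    have hval : Dform q u 1 (y0*x+x0*y) 0 = α := by
      rw [hu, h1, show (0:F) = y0*x0+x0*y0 from h00.symm]
      exact hDv.trans hD
    have hvz : (y0*x+x0*y) + u = z := by
      apply hinj
      rw [hz]
      have hc := (Dcomp q h2 hFr u (y0*x+x0*y)).symm.trans hval
      linear_combination hc - u^(q+1)*h2
    have hveq : y0*x+x0*y = z + u := by linear_combination hvz - u*h2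
    rw [hleq, ← hspan, ← hu, ← h1, hveq, h00]
  constructor
  · exact ⟨lineSpan q (u,(1:F)) (z+u,(0:F)), ⟨hB0, hmem0⟩, fun ℓ hℓ => key ℓ hℓ.1 hℓ.2⟩
  · intro z' hz' ℓ hB hp
    have hzz : z' = z := hinj _ _ (hz'.trans hz.symm)
    rw [hzz]
    exact key ℓ hB hp
end

section
/- Let q = 2^k with k odd, n ≥ 3 odd, and α ∈ F_{q^n}^×. Then B_α is a line-spread of PG_n(q): every nonzero vector of V = F_{q^n} ⊕ F_q·w lies in exactly one member of B_α, i.e., the subspaces in B_α partition the nonzero vectors (equivalently, the points of PG_n(q)). -/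
set_option linter.unusedSectionVars false
set_option maxHeartbeats 1000000

namespace SpreadAux

variable {F : Type} [Field F]

lemma add_self_eq (htwo : (2:F) = 0) (a : F) : a + a = 0 := by
  linear_combination a * htwo

lemma eq_of_add_eq_zero' (htwo : (2:F) = 0) {a b : F} (h : a + b = 0) : a = b := by
  linear_combination h - b * htwo

lemma sq_inj (htwo : (2:F) = 0) {a b : F} (h : a ^ 2 = b ^ 2) : a = b := by
  have h0 : (a + b) ^ 2 = 0 := by linear_combination h + (b^2 + a*b) * htwo
  have := pow_eq_zero_iff (n := 2) (by norm_num) |>.mp h0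
  linear_combination this - b * htwo

lemma coprime_qp1 (q k n : ℕ) (hq : q = 2 ^ k) (hk : Odd k) (hn : Odd n) :
    Nat.Coprime (q + 1) (q ^ n - 1) := by
  have hk1 : 1 ≤ k := hk.pos
  have hq2 : 2 ≤ q := by
    subst hq; calc 2 = 2^1 := rfl
    _ ≤ 2^k := Nat.pow_le_pow_right (by norm_num) hk1
  have hqn1 : 1 ≤ q ^ n := Nat.one_le_pow _ _ (by omega)
  have hdvdZ : ((q:ℤ) + 1) ∣ (q:ℤ) ^ n + 1 := by
    have h1 : (q:ℤ) ≡ -1 [ZMOD (q+1)] := by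
      have : ((q:ℤ)+1) ∣ (-1 - (q:ℤ)) := ⟨-1, by ring⟩
      exact Int.modEq_iff_dvd.mpr this
    have h2 : (q:ℤ)^n ≡ (-1)^n [ZMOD (q+1)] := h1.pow n
    rw [hn.neg_one_pow] at h2
    have := Int.ModEq.dvd h2
    simpa using (dvd_neg.mpr this)
  have hdvdN : (q + 1) ∣ q ^ n + 1 := by
    have := Int.natCast_dvd_natCast.mpr (dvd_refl (q+1))
    zify
    convert hdvdZ using 2
  set d := Nat.gcd (q+1) (q^n - 1) with hd
  have hd1 : d ∣ q + 1 := Nat.gcd_dvd_left _ _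
  have hd2 : d ∣ q ^ n - 1 := Nat.gcd_dvd_right _ _
  have hd3 : d ∣ q ^ n + 1 := hd1.trans hdvdN
  have hd4 : d ∣ 2 := by
    have h5 := Nat.dvd_sub hd3 hd2
    have : q ^ n + 1 - (q ^ n - 1) = 2 := by omega
    rwa [this] at h5
  have hodd : ¬ 2 ∣ (q + 1) := by
    subst hq
    have : 2 ∣ 2^k := dvd_pow_self 2 (by omega)
    omega
  rcases (Nat.dvd_prime Nat.prime_two).mp hd4 with h | h
  · exact h
  · exact absurd (h ▸ hd1) hodd

section frob
variable (q k : ℕ) (hq : q = 2 ^ k) [CharP F 2]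

include hq in
lemma qpow_add' (a b : F) : (a + b) ^ q = a ^ q + b ^ q := by
  subst hq; exact add_pow_char_pow a b 2 k

include hq in
lemma qipow_add (i : ℕ) (a b : F) : (a + b) ^ q ^ i = a ^ q ^ i + b ^ q ^ i := by
  subst hq; rw [← pow_mul]; exact add_pow_char_pow a b 2 (k*i)

include hq in
lemma qne0 : q ≠ 0 := by subst hq; positivity

/-- Frobenius as an additive hom -/
def frobq (hq : q = 2 ^ k) : F →+ F where
  toFun := (· ^ q)
  map_zero' := zero_pow (qne0 q k hq)
  map_add' := qpow_add' q k hq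

include hq in
lemma exists_sqrt (hk : Odd k) {γ : F} (hγ : γ ^ q = γ) :
    ∃ δ : F, δ ^ q = δ ∧ δ ^ 2 = γ := by
  have hk1 : 1 ≤ k := hk.pos
  refine ⟨γ ^ (2 ^ (k-1)), ?_, ?_⟩
  · calc (γ ^ 2^(k-1)) ^ q = (γ ^ q) ^ 2^(k-1) := by
          rw [← pow_mul, mul_comm (2^(k-1)) q, pow_mul]
    _ = γ ^ 2^(k-1) := by rw [hγ]
  · rw [← pow_mul]
    have h2 : 2 ^ (k-1) * 2 = 2 ^ k := by
      rw [← pow_succ]; congr 1; omega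
    rw [h2, ← hq, hγ]

variable (n : ℕ)

/-- the trace-like sum -/
def Tr (z : F) : F := ∑ i ∈ Finset.range n, z ^ q ^ i

include hq in
lemma Tr_add (a b : F) : Tr q n (a + b) = Tr q n a + Tr q n b := by
  unfold Tr
  rw [← Finset.sum_add_distrib]
  exact Finset.sum_congr rfl fun i _ => qipow_add q k hq i a b

lemma hKpow {c : F} (hc : c ^ q = c) (i : ℕ) : c ^ q ^ i = c := by
  induction i with
  | zero => simp
  | succ i ih => rw [pow_succ, pow_mul, ih, hc]

lemma Tr_K (htwo : (2:F) = 0) (hn : Odd n) {c : F} (hc : c ^ q = c) : Tr q n c = c := by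
  unfold Tr
  obtain ⟨m, hm⟩ := hn
  calc ∑ i ∈ Finset.range n, c ^ q ^ i = ∑ i ∈ Finset.range n, c :=
        Finset.sum_congr rfl fun i _ => hKpow q hc i
    _ = n • c := by rw [Finset.sum_const, Finset.card_range]
    _ = c := by
        rw [nsmul_eq_mul, hm]
        push_cast
        linear_combination (m : F) * c * htwo

variable [Fintype F] (hF : Fintype.card F = q ^ n)

include hF in
lemma pow_qn (z : F) : z ^ q ^ n = z := by rw [← hF]; exact FiniteField.pow_card z

include hq hF in
lemma Tr_qfix (z : F) : (Tr q n z) ^ q = Tr q n z := by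
  have hmap : (Tr q n z) ^ q = ∑ i ∈ Finset.range n, (z ^ q ^ i) ^ q :=
    map_sum (frobq q k hq) _ _
  have hpt : ∀ i, (z ^ q ^ i) ^ q = z ^ q ^ (i+1) := fun i => by
    rw [← pow_mul, ← pow_succ]
  have h1 := Finset.sum_range_succ' (fun i => z ^ q ^ i) n
  have h2 := Finset.sum_range_succ (fun i => z ^ q ^ i) n
  have hn0 : z ^ q ^ n = z ^ q ^ 0 := by rw [pow_qn q n hF z, pow_zero, pow_one]
  rw [hmap]
  have : ∑ i ∈ Finset.range n, (z ^ q ^ i) ^ q = ∑ i ∈ Finset.range n, z ^ q ^ (i+1) :=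
    Finset.sum_congr rfl fun i _ => hpt i
  rw [this]
  unfold Tr
  rw [hn0] at h2
  have h3 : ∑ i ∈ Finset.range n, z ^ q ^ (i+1) + z ^ q ^ 0
      = ∑ i ∈ Finset.range n, z ^ q ^ i + z ^ q ^ 0 := h1.symm.trans h2
  exact add_right_cancel h3

include hq hF in
lemma Tr_qarg (z : F) : Tr q n (z ^ q) = Tr q n z := by
  have hmap : (∑ i ∈ Finset.range n, z ^ q ^ i) ^ q = ∑ i ∈ Finset.range n, (z ^ q ^ i) ^ q :=
    map_sum (frobq q k hq) _ _
  have : Tr q n (z ^ q) = (Tr q n z) ^ q := by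
    unfold Tr
    rw [hmap]
    exact Finset.sum_congr rfl fun i _ => by
      rw [← pow_mul, ← pow_mul, mul_comm]
  rw [this, Tr_qfix q k hq n hF z]

include hq hF in
/-- additive Hilbert 90 with explicit witness -/
lemma exists_AS (htwo : (2:F) = 0) (hn : Odd n) {w : F} (hw : Tr q n w = 0) :
    ∃ t : F, t ^ q + t = w := by
  classical
  set S : ℕ → F := fun i => ∑ j ∈ Finset.range i, w ^ q ^ j with hS
  set t : F := ∑ i ∈ Finset.range n, S i with ht
  have key : ∀ i, (S i) ^ q + w = S (i+1) := by
    intro i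
    have hmapi : (S i) ^ q = ∑ j ∈ Finset.range i, (w ^ q ^ j) ^ q :=
      map_sum (frobq q k hq) _ _
    have : (S i) ^ q = ∑ j ∈ Finset.range i, w ^ q ^ (j+1) := by
      rw [hmapi]
      exact Finset.sum_congr rfl fun j _ => by
        rw [← pow_mul, ← pow_succ]
    rw [this, hS]
    have := Finset.sum_range_succ' (fun j => w ^ q ^ j) i
    simp only [pow_zero, pow_one] at this
    exact this.symm
  have htq : t ^ q = ∑ i ∈ Finset.range n, (S i) ^ q := map_sum (frobq q k hq) _ _
  have hsum : t ^ q + n • w = ∑ i ∈ Finset.range n, S (i+1) := by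
    have h0 : ∑ i ∈ Finset.range n, ((S i) ^ q + w) = ∑ i ∈ Finset.range n, S (i+1) :=
      Finset.sum_congr rfl fun i _ => key i
    rw [Finset.sum_add_distrib, Finset.sum_const, Finset.card_range] at h0
    rw [htq]; exact h0
  have hshift : ∑ i ∈ Finset.range n, S (i+1) = t + S n := by
    have h1 := Finset.sum_range_succ' S n
    have h2 := Finset.sum_range_succ S n
    have hS0 : S 0 = 0 := by simp [hS]
    have h3 : ∑ i ∈ Finset.range n, S (i+1) + S 0 = t + S n := h1.symm.trans h2
    rw [hS0, add_zero] at h3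
    exact h3
  have hSn : S n = 0 := hw
  have hnw : n • w = w := by
    obtain ⟨m, hm⟩ := hn
    rw [nsmul_eq_mul, hm]; push_cast; linear_combination (m:F) * w * htwo
  have hfin : t ^ q + w = t := by rw [← hnw, hsum, hshift, hSn, add_zero]
  exact ⟨t, by linear_combination hfin + (t - w) * htwo⟩

include hq hF in
lemma exists_m (hk : Odd k) (hn : Odd n) (hn3 : 3 ≤ n) :
    ∃ m : ℕ, ∀ z : F, (z ^ (q+1)) ^ m = z ∧ (z ^ m) ^ (q+1) = z := by
  have hq2 : 2 ≤ q := by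
    subst hq; calc 2 = 2^1 := rfl
    _ ≤ 2^k := Nat.pow_le_pow_right (by norm_num) hk.pos
  set N := q ^ n - 1 with hN
  have hqn : 8 ≤ q ^ n := by
    calc (8:ℕ) = 2^3 := rfl
    _ ≤ 2^n := Nat.pow_le_pow_right (by norm_num) hn3
    _ ≤ q^n := Nat.pow_le_pow_left hq2 n
  have hN2 : 2 ≤ N := by omega
  have hcop := coprime_qp1 q k n hq hk hn
  have htot : 1 ≤ N.totient := (Nat.totient_pos).mpr (by omega)
  have hmod : (q+1) ^ N.totient % N = 1 := by
    have := Nat.ModEq.pow_totient hcop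
    unfold Nat.ModEq at this
    rwa [Nat.mod_eq_of_lt (by omega : 1 < N)] at this
  set m := (q+1) ^ (N.totient - 1) with hm
  have hqm : (q+1) * m = N * ((q+1) ^ N.totient / N) + 1 := by
    have h1 : (q+1) * m = (q+1) ^ N.totient := by
      rw [hm, ← pow_succ']
      congr 1; omega
    rw [h1]
    conv_lhs => rw [← Nat.div_add_mod ((q+1) ^ N.totient) N]
    rw [hmod]
  refine ⟨m, fun z => ?_⟩
  have key : z ^ ((q+1) * m) = z := by
    rcases eq_or_ne z 0 with rfl | hz
    · rw [zero_pow (by positivity)]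
    · rw [hqm, pow_add, pow_mul, pow_one]
      have : z ^ N = 1 := by
        rw [hN, ← hF]; exact FiniteField.pow_card_sub_one_eq_one z hz
      rw [this, one_pow, one_mul]
  constructor
  · rw [← pow_mul]; exact key
  · rw [← pow_mul, mul_comm]; exact key

end frob

section alg
variable (q k : ℕ) (hq : q = 2 ^ k) [CharP F 2]

include hq in
lemma key1 (htwo : (2:F) = 0) (x t y0 : F) (hy0 : y0 ^ q = y0) :
    Dform q x 0 (t*x) y0 = (x^q * x) * (t^q + t + y0^2) := by
  unfold Dform
  rw [zero_mul, add_zero,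
    show (x * y0) ^ (q+1) = (x * y0) ^ q * (x * y0) from pow_succ _ q,
    mul_pow, mul_pow, hy0]
  ring

include hq in
lemma key2 (htwo : (2:F) = 0) (x x0 y y0 : F) (hx0 : x0 ^ q = x0) (hy0 : y0 ^ q = y0) :
    (x0^2 * y + (1 + x0*y0) * x)^(q+1) = x0^2 * Dform q x x0 y y0 + x^q * x := by
  have hx02 : (x0^2)^q = x0^2 := by
    rw [← pow_mul, mul_comm 2 q, pow_mul, hx0]
  have h1 : (1 + x0*y0)^q = 1 + x0*y0 := by
    rw [qpow_add' q k hq, one_pow, mul_pow, hx0, hy0]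
  have hsq : (x*y0 + x0*y)^q = x^q*y0 + x0*y^q := by
    rw [qpow_add' q k hq, mul_pow, mul_pow, hx0, hy0]
  have hBq : (x0^2*y + (1+x0*y0)*x)^q = x0^2*y^q + (1+x0*y0)*x^q := by
    rw [qpow_add' q k hq, mul_pow, mul_pow, hx02, h1]
  unfold Dform
  rw [show (x0^2 * y + (1 + x0*y0) * x) ^ (q+1) = (x0^2 * y + (1 + x0*y0) * x) ^ q * (x0^2 * y + (1 + x0*y0) * x) from pow_succ _ q,
    show (x * y0 + x0 * y) ^ (q+1) = (x * y0 + x0 * y) ^ q * (x * y0 + x0 * y) from pow_succ _ q,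
    hsq, hBq]
  linear_combination (x0*y0*x*x^q) * htwo

include hq in
lemma Dform_basis_change (htwo : (2:F) = 0) (x1 x01 x2 x02 a b c d : F)
    (hKa : a^q = a) (hKb : b^q = b) (hKc : c^q = c) (hKd : d^q = d)
    (h01 : x01^q = x01) (h02 : x02^q = x02) (had : a*d + b*c = 1) :
    Dform q (a*x1+b*x2) (a*x01+b*x02) (c*x1+d*x2) (c*x01+d*x02) = Dform q x1 x01 x2 x02 := by
  have e1 : (a*x1+b*x2)^q = a*x1^q + b*x2^q := by
    rw [qpow_add' q k hq, mul_pow, mul_pow, hKa, hKb]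
  have e2 : (c*x1+d*x2)^q = c*x1^q + d*x2^q := by
    rw [qpow_add' q k hq, mul_pow, mul_pow, hKc, hKd]
  have es : (a*x1+b*x2)*(c*x01+d*x02) + (a*x01+b*x02)*(c*x1+d*x2) = x1*x02 + x01*x2 := by
    linear_combination (x1*x02 + x01*x2)*had + (a*c*x1*x01 + b*d*x2*x02)*htwo
  unfold Dform
  rw [e1, e2, es]
  linear_combination (x1*x2^q + x1^q*x2)*had + (a*c*x1*x1^q + b*d*x2*x2^q)*htwo

end alg

section main
variable (q k n : ℕ) (hq : q = 2 ^ k) [CharP F 2] [Fintype F]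

include hq in
/-- solution structure, case x0 ≠ 0 -/
lemma solve_ne (htwo : (2:F) = 0) (m : ℕ)
    (hm : ∀ z : F, (z ^ (q+1)) ^ m = z ∧ (z ^ m) ^ (q+1) = z)
    (α : F) (hα : α ≠ 0) (x x0 : F) (hx0K : x0 ^ q = x0) (hx0 : x0 ≠ 0) :
    ∃ Y Y0 : F, Y0 ^ q = Y0 ∧ IndepPair q x x0 Y Y0 ∧ Dform q x x0 Y Y0 = α ∧
      ∀ y y0 : F, y0 ^ q = y0 → Dform q x x0 y y0 = α →
        ∃ c : F, c ^ q = c ∧ y = Y + c * x ∧ y0 = Y0 + c * x0 := by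
  have hq0 : q ≠ 0 := by subst hq; positivity
  have hinv : x0 * x0⁻¹ = 1 := mul_inv_cancel₀ hx0
  set w1 : F := x0^2 * α + x^q * x with hw1
  set z1 : F := w1 ^ m with hz1def
  have hz1 : z1 ^ (q+1) = w1 := (hm w1).2
  set Y : F := (z1 + x) * (x0⁻¹)^2 with hY
  have hz1x : z1 + x ≠ 0 := by
    intro h
    have hzx : z1 = x := by linear_combination h - x * htwo
    rw [hzx] at hz1
    rw [show x ^ (q+1) = x^q * x from pow_succ _ q] at hz1
    have h0 : x0^2 * α = 0 := by linear_combination -hz1 - hw1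
    rcases mul_eq_zero.mp h0 with h | h
    · exact hx0 (pow_eq_zero_iff (by norm_num)|>.mp h)
    · exact hα h
  have hYne : Y ≠ 0 := by
    rw [hY]
    refine mul_ne_zero hz1x ?_
    exact pow_ne_zero 2 (inv_ne_zero hx0)
  refine ⟨Y, 0, zero_pow hq0, ?_, ?_, ?_⟩
  · -- IndepPair
    intro a b hKa hKb h1 h2
    rw [mul_zero, add_zero] at h2
    rcases mul_eq_zero.mp h2 with ha | ha
    · subst ha
      rw [zero_mul, zero_add] at h1
      rcases mul_eq_zero.mp h1 with hb | hb
      · exact ⟨rfl, hb⟩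
      · exact absurd hb hYne
    · exact absurd ha hx0
  · -- Dform value
    have hbase : x0^2 * Y + (1 + x0*0)*x = z1 := by
      rw [hY]
      linear_combination (z1+x)*(x0*x0⁻¹+1)*hinv + x*htwo
    have hk2 := key2 q k hq htwo x x0 Y 0 hx0K (zero_pow hq0)
    rw [hbase, hz1, hw1] at hk2
    have := add_right_cancel hk2
    exact (mul_left_cancel₀ (pow_ne_zero 2 hx0) this).symm
  · -- uniqueness of solutions
    intro y y0 hy0 hD
    have hk2 := key2 q k hq htwo x x0 y y0 hx0K hy0
    rw [hD] at hk2
    have hB : x0^2*y + (1+x0*y0)*x = z1 := by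
      have h5 := (hm (x0^2*y + (1+x0*y0)*x)).1
      rw [hk2, ← hw1] at h5
      rw [hz1def]
      exact h5.symm
    have hcK : (y0 * x0⁻¹)^q = y0 * x0⁻¹ := by
      rw [mul_pow, hy0, inv_pow, hx0K]
    refine ⟨y0 * x0⁻¹, hcK, ?_, ?_⟩
    · rw [hY]
      linear_combination ((x0⁻¹)^2)*hB + (-y*(x0*x0⁻¹+1) - y0*x*x0⁻¹)*hinv
        + (-x*(x0⁻¹)^2 - y0*x*x0⁻¹)*htwo
    · linear_combination (-y0)*hinv

include hq in
/-- solution structure, case x0 = 0 -/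
lemma solve_eq (htwo : (2:F) = 0) (hk : Odd k) (hn : Odd n) (hF : Fintype.card F = q ^ n)
    (α : F) (hα : α ≠ 0) (x : F) (hx : x ≠ 0) :
    ∃ Y Y0 : F, Y0 ^ q = Y0 ∧ IndepPair q x 0 Y Y0 ∧ Dform q x 0 Y Y0 = α ∧
      ∀ y y0 : F, y0 ^ q = y0 → Dform q x 0 y y0 = α →
        ∃ c : F, c ^ q = c ∧ y = Y + c * x ∧ y0 = Y0 + c * 0 := by
  have hq0 : q ≠ 0 := by subst hq; positivity
  have hxq : x^q * x ≠ 0 := mul_ne_zero (pow_ne_zero q hx) hx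
  set β : F := α * (x^q*x)⁻¹ with hβdef
  have hβ : β ≠ 0 := mul_ne_zero hα (inv_ne_zero hxq)
  have hαβ : (x^q*x) * β = α := by rw [hβdef]; field_simp
  have hTrK : (Tr q n β)^q = Tr q n β := Tr_qfix q k hq n hF β
  obtain ⟨δ, hδK, hδ2⟩ := exists_sqrt q k hq hk hTrK
  have hδ2K : (δ^2)^q = δ^2 := by rw [← pow_mul, mul_comm 2 q, pow_mul, hδK]
  have hw : Tr q n (β + δ^2) = 0 := by
    rw [Tr_add q k hq n, Tr_K q n htwo hn hδ2K, hδ2]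
    exact add_self_eq htwo _
  obtain ⟨t0, ht0⟩ := exists_AS q k hq n hF htwo hn hw
  refine ⟨t0*x, δ, hδK, ?_, ?_, ?_⟩
  · -- IndepPair
    intro a b hKa hKb h1 h2
    rw [mul_zero, zero_add] at h2
    by_cases hδ0 : δ = 0
    · have h3 : (a + b*t0) * x = 0 := by linear_combination h1
      have h4 : a + b*t0 = 0 := (mul_eq_zero.mp h3).resolve_right hx
      by_cases hb : b = 0
      · subst hb
        rw [zero_mul, add_zero] at h4
        exact ⟨h4, rfl⟩
      · exfalso
        have ha4 : a = b * t0 := eq_of_add_eq_zero' htwo h4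
        have ht0v : t0 = a * b⁻¹ := by rw [ha4]; field_simp
        have ht0K : t0^q = t0 := by rw [ht0v, mul_pow, hKa, inv_pow, hKb]
        have hβ0 : β + δ^2 = 0 := by linear_combination -ht0 + ht0K + t0*htwo
        rw [hδ0] at hβ0
        apply hβ
        linear_combination hβ0
    · have hb : b = 0 := (mul_eq_zero.mp h2).resolve_right hδ0
      subst hb
      rw [zero_mul, add_zero] at h1
      exact ⟨(mul_eq_zero.mp h1).resolve_right hx, rfl⟩
  · -- Dform value
    rw [key1 q k hq htwo x t0 δ hδK, ht0]
    linear_combination hαβ + (x^q*x*δ^2)*htwo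
  · -- uniqueness
    intro y y0 hy0 hD
    set t : F := y * x⁻¹ with htdef
    have hyt : y = t * x := by rw [htdef]; field_simp
    rw [hyt, key1 q k hq htwo x t y0 hy0] at hD
    have heq : t^q + t + y0^2 = β := by
      apply mul_left_cancel₀ hxq
      rw [hD, hαβ]
    have hy02K : (y0^2)^q = y0^2 := by rw [← pow_mul, mul_comm 2 q, pow_mul, hy0]
    have htr : y0^2 = Tr q n β := by
      have h6 : Tr q n (t^q + t + y0^2) = Tr q n β := by rw [heq]
      rw [Tr_add q k hq n, Tr_add q k hq n, Tr_qarg q k hq n hF,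
        Tr_K q n htwo hn hy02K] at h6
      linear_combination h6 - (Tr q n t)*htwo
    have hy0δ : y0 = δ := sq_inj htwo (htr.trans hδ2.symm)
    have hT : t^q = β + y0^2 + t := by linear_combination heq - (t + y0^2)*htwo
    have hT0 : t0^q = β + δ^2 + t0 := by linear_combination ht0 - t0*htwo
    have hcK : (t + t0)^q = t + t0 := by
      rw [qpow_add' q k hq, hT, hT0, hy0δ]
      linear_combination (β + δ^2)*htwo
    refine ⟨t + t0, hcK, ?_, ?_⟩
    · rw [hyt]
      linear_combination -t0*x*htwo
    · rw [hy0δ]; ring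

include hq in
lemma lineSpan_shift (htwo : (2:F) = 0) (x x0 Y Y0 c : F) (hc : c^q = c) :
    lineSpan q (x,x0) (Y + c*x, Y0 + c*x0) = lineSpan q (x,x0) (Y,Y0) := by
  have hq0 : q ≠ 0 := by subst hq; positivity
  ext p
  simp only [lineSpan, Set.mem_setOf_eq]
  constructor
  · rintro ⟨e, f, hKe, hKf, rfl⟩
    refine ⟨e + f*c, f, ?_, hKf, ?_⟩
    · rw [qpow_add' q k hq, mul_pow, hKe, hKf, hc]
    · simp only [Prod.mk.injEq]
      constructor <;> ring
  · rintro ⟨e, f, hKe, hKf, rfl⟩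
    refine ⟨e + f*c, f, ?_, hKf, ?_⟩
    · rw [qpow_add' q k hq, mul_pow, hKe, hKf, hc]
    · simp only [Prod.mk.injEq]
      constructor
      · linear_combination -f*c*x*htwo
      · linear_combination -f*c*x0*htwo

include hq in
lemma lineSpan_basis_change (htwo : (2:F) = 0)
    (x1 x01 x2 x02 a b c d : F)
    (hKa : a^q = a) (hKb : b^q = b) (hKc : c^q = c) (hKd : d^q = d)
    (had : a*d + b*c = 1) :
    lineSpan q (x1,x01) (x2,x02)
      = lineSpan q (a*x1+b*x2, a*x01+b*x02) (c*x1+d*x2, c*x01+d*x02) := by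
  ext p
  simp only [lineSpan, Set.mem_setOf_eq]
  constructor
  · rintro ⟨e, f, hKe, hKf, rfl⟩
    refine ⟨e*d + f*c, e*b + f*a, ?_, ?_, ?_⟩
    · rw [qpow_add' q k hq, mul_pow, mul_pow, hKe, hKf, hKc, hKd]
    · rw [qpow_add' q k hq, mul_pow, mul_pow, hKe, hKf, hKa, hKb]
    · simp only [Prod.mk.injEq]
      constructor
      · linear_combination -(e*x1+f*x2)*had - (a*c*f*x1 + b*d*e*x2)*htwo
      · linear_combination -(e*x01+f*x02)*had - (a*c*f*x01 + b*d*e*x02)*htwo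
  · rintro ⟨e, f, hKe, hKf, rfl⟩
    refine ⟨e*a + f*c, e*b + f*d, ?_, ?_, ?_⟩
    · rw [qpow_add' q k hq, mul_pow, mul_pow, hKe, hKf, hKa, hKc]
    · rw [qpow_add' q k hq, mul_pow, mul_pow, hKe, hKf, hKb, hKd]
    · simp only [Prod.mk.injEq]
      constructor <;> ring

end main
end SpreadAux


theorem stmt12 (k n : ℕ) (hk : Odd k) (hn : Odd n) (hn3 : 3 ≤ n)
    (q : ℕ) (hq : q = 2 ^ k)
    (F : Type) [Field F] [Fintype F] (hF : Fintype.card F = q ^ n)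
    (α : F) (hα : α ≠ 0) :
    ∀ v : F × F, v.2 ^ q = v.2 → v ≠ 0 →
      ∃! ℓ : Set (F × F), ℓ ∈ Bset q α ∧ v ∈ ℓ := by
  have hk1 : 1 ≤ k := hk.pos
  have hq0 : q ≠ 0 := by rw [hq]; positivity
  have hkn0 : k * n ≠ 0 := by positivity
  have htwo : (2:F) = 0 := by
    have hc := FiniteField.cast_card_eq_zero F
    rw [hF, hq] at hc
    have h2 : ((2:F))^(k*n) = 0 := by
      rw [pow_mul]
      exact_mod_cast hc
    exact pow_eq_zero_iff hkn0 |>.mp h2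
  haveI hchar : CharP F 2 := by
    have hd : ringChar F ∣ 2 := ringChar.dvd (by exact_mod_cast htwo)
    have h2 : ringChar F = 2 := by
      rcases (Nat.dvd_prime Nat.prime_two).mp hd with h | h
      · exact absurd h (CharP.char_ne_one F (ringChar F))
      · exact h
    rw [← h2]
    exact ringChar.charP F
  obtain ⟨m, hm⟩ := SpreadAux.exists_m q k hq n hF hk hn hn3
  rintro ⟨x, x0⟩ hv2 hv0
  replace hv2 : x0 ^ q = x0 := hv2
  have hsol : ∃ Y Y0 : F, Y0^q = Y0 ∧ IndepPair q x x0 Y Y0 ∧ Dform q x x0 Y Y0 = α ∧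
      ∀ y y0 : F, y0^q = y0 → Dform q x x0 y y0 = α →
        ∃ c : F, c^q = c ∧ y = Y + c*x ∧ y0 = Y0 + c*x0 := by
    by_cases hx00 : x0 = 0
    · subst hx00
      have hx : x ≠ 0 := by
        intro h
        exact hv0 (Prod.mk_eq_zero.mpr ⟨h, rfl⟩)
      exact SpreadAux.solve_eq q k n hq htwo hk hn hF α hα x hx
    · exact SpreadAux.solve_ne q k hq htwo m hm α hα x x0 hv2 hx00
  obtain ⟨Y, Y0, hY0K, hIndep, hDval, huniq⟩ := hsol
  refine ⟨lineSpan q (x,x0) (Y,Y0), ⟨⟨x, x0, Y, Y0, hv2, hY0K, hIndep, rfl, hDval⟩, ?_⟩, ?_⟩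
  · exact ⟨1, 0, one_pow q, zero_pow hq0, by simp⟩
  · rintro ℓ ⟨⟨x1, x01, x2, x02, h01, h02, hInd12, rfl, hD12⟩, hvmem⟩
    obtain ⟨a, b, hKa, hKb, hab⟩ := hvmem
    have habx : x = a*x1 + b*x2 := congrArg Prod.fst hab
    have habx0 : x0 = a*x01 + b*x02 := congrArg Prod.snd hab
    have hne : ¬(a = 0 ∧ b = 0) := by
      rintro ⟨rfl, rfl⟩
      apply hv0
      rw [habx, habx0] at *
      exact Prod.mk_eq_zero.mpr ⟨by rw [habx]; ring, by rw [habx0]; ring⟩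
    obtain ⟨c, d, hKc, hKd, had⟩ : ∃ c d : F, c^q = c ∧ d^q = d ∧ a*d + b*c = 1 := by
      by_cases ha : a = 0
      · have hb : b ≠ 0 := fun hb => hne ⟨ha, hb⟩
        exact ⟨b⁻¹, 0, by rw [inv_pow, hKb], zero_pow hq0, by rw [ha]; field_simp; simp⟩
      · exact ⟨0, a⁻¹, zero_pow hq0, by rw [inv_pow, hKa], by field_simp; simp⟩
    have hDu : Dform q x x0 (c*x1+d*x2) (c*x01+d*x02) = α := by
      rw [habx, habx0,
        SpreadAux.Dform_basis_change q k hq htwo x1 x01 x2 x02 a b c d hKa hKb hKc hKd h01 h02 had]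
      exact hD12
    have huK : (c*x01+d*x02)^q = c*x01+d*x02 := by
      rw [SpreadAux.qpow_add' q k hq, mul_pow, mul_pow, hKc, hKd, h01, h02]
    obtain ⟨c0, hc0K, hyc, hy0c⟩ := huniq (c*x1+d*x2) (c*x01+d*x02) huK hDu
    calc lineSpan q (x1,x01) (x2,x02)
        = lineSpan q (x,x0) (c*x1+d*x2, c*x01+d*x02) := by
          have h := SpreadAux.lineSpan_basis_change q k hq htwo x1 x01 x2 x02 a b c d
            hKa hKb hKc hKd had
          rw [← habx, ← habx0] at h
          exact h
      _ = lineSpan q (x,x0) (Y,Y0) := by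
          rw [hyc, hy0c]
          exact SpreadAux.lineSpan_shift q k hq htwo x x0 Y Y0 c0 hc0K
end

section
/- Let q = 2^k with k odd, n ≥ 3 odd, and let ℓ be a 2-dimensional F_q-subspace of V = F_{q^n} ⊕ F_q·w with basis x + x₀w, y + y₀w. For λ ∈ F_q \ {0,1}, the value of D(λx, λx₀, y, y₀) differs from D(x, x₀, y, y₀), where D(x,x₀,y,y₀) = (x·y^q + x^q·y) + (x·y₀ + x₀·y)^(q+1). -/
lemma charTwoAux {F : Type} [Field F] [Fintype F] (m : ℕ) (hm : m ≠ 0)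
    (h : Fintype.card F = 2 ^ m) : CharP F 2 := by
  have hc : ((Fintype.card F : ℕ) : F) = 0 := FiniteField.cast_card_eq_zero F
  rw [h] at hc
  push_cast at hc
  have h2 : (2 : F) = 0 := (pow_eq_zero_iff hm).mp hc
  have hdvd : ringChar F ∣ 2 := ringChar.dvd (by exact_mod_cast h2)
  rcases (Nat.dvd_prime Nat.prime_two).mp hdvd with h1 | h1
  · exact absurd h1 (CharP.char_ne_one F (ringChar F))
  · exact h1 ▸ ringChar.charP F

/-- If `r + r^q = c` with `c ∈ F_q`, then `c = 0` (for `q = 2^k`, `|F| = q^n`, `n` odd). -/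
lemma keyTrace {F : Type} [Field F] [Fintype F] [CharP F 2] (k q n : ℕ) (hq : q = 2 ^ k)
    (hn : Odd n) (hcard : Fintype.card F = q ^ n) (r c : F) (hc : c ^ q = c)
    (hrc : r + r ^ q = c) : c = 0 := by
  by_contra hc0
  have frob : ∀ (i : ℕ) (a b : F), (a + b) ^ q ^ i = a ^ q ^ i + b ^ q ^ i := by
    intro i a b
    rw [hq, ← pow_mul]
    exact add_pow_char_pow a b 2 (k * i)
  set s : F := r * c⁻¹ with hs
  have hcinv : (c⁻¹ : F) ^ q = c⁻¹ := by rw [inv_pow, hc]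
  have hsq : s + s ^ q = 1 := by
    rw [hs, mul_pow, hcinv, ← add_mul, hrc, mul_inv_cancel₀ hc0]
  set f : ℕ → F := fun i => s ^ q ^ i with hf
  have tele : ∑ i ∈ Finset.range n, (f (i + 1) - f i) = f n - f 0 := Finset.sum_range_sub f n
  have hterm : ∀ i, f (i + 1) - f i = 1 := by
    intro i
    have h1 : f (i + 1) = (s ^ q) ^ q ^ i := by
      show s ^ q ^ (i + 1) = (s ^ q) ^ q ^ i
      rw [← pow_mul]
      congr 1
      ring
    rw [h1]
    show (s ^ q) ^ q ^ i - s ^ q ^ i = 1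
    rw [sub_eq_add_neg, CharTwo.neg_eq, add_comm, ← frob i s (s ^ q), hsq, one_pow]
  have hsum : ∑ i ∈ Finset.range n, (f (i + 1) - f i) = (n : F) := by
    rw [Finset.sum_congr rfl fun i _ => hterm i]
    simp
  have hend : f n - f 0 = 0 := by
    have h1 : f n = s := by
      show s ^ q ^ n = s
      rw [← hcard]
      exact FiniteField.pow_card s
    rw [h1]
    show s - s ^ q ^ 0 = 0
    simp
  rw [hsum, hend] at tele
  have hnodd : (n : F) = 1 := by
    obtain ⟨m, hm⟩ := hn
    have h2 : (2 : F) = 0 := by exact_mod_cast (CharP.cast_eq_zero F 2)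
    rw [hm]
    push_cast
    rw [h2]
    ring
  rw [hnodd] at tele
  exact one_ne_zero tele

lemma nonvanish {F : Type} [Field F] [Fintype F] [CharP F 2] (k q n : ℕ) (hq : q = 2 ^ k)
    (hn : Odd n) (hcard : Fintype.card F = q ^ n) (x x0 y y0 : F)
    (hx0 : x0 ^ q = x0) (hy0 : y0 ^ q = y0) (hind : IndepPair q x x0 y y0) :
    Dform q x x0 y y0 ≠ 0 := by
  intro hD
  have h2 : (2 : F) = 0 := by exact_mod_cast (CharP.cast_eq_zero F 2)
  have hqne : q ≠ 0 := by rw [hq]; positivity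
  have frob : ∀ a b : F, (a + b) ^ q = a ^ q + b ^ q := by
    intro a b
    rw [hq]
    exact add_pow_char_pow a b 2 k
  unfold Dform at hD
  have hs : x * y ^ q + x ^ q * y = (x * y0 + x0 * y) ^ (q + 1) := by
    linear_combination hD + (-(x * y0 + x0 * y) ^ (q + 1)) * h2
  have huq : (x * y0 + x0 * y) ^ q = x ^ q * y0 + x0 * y ^ q := by
    rw [frob, mul_pow, mul_pow, hy0, hx0]
  have hu0 : (x * y0 + x0 * y) = 0 → y0 = 0 ∧ x0 = 0 := by
    intro h
    exact hind y0 x0 hy0 hx0 (by linear_combination h)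
      (by linear_combination (x0 * y0) * h2)
  have hyne : y0 = 0 → y ≠ 0 := by
    intro hy0z hyz
    have h := hind 0 1 (by simp [zero_pow hqne]) (by simp)
      (by rw [hyz]; ring) (by rw [hy0z]; ring)
    exact one_ne_zero h.2
  by_cases hy0' : y0 = 0
  · by_cases hx0' : x0 = 0
    · -- both zero: x y^q + x^q y = 0, y ≠ 0
      subst hy0' hx0'
      have hy : y ≠ 0 := hyne rfl
      have hs0 : x * y ^ q + x ^ q * y = 0 := by
        rw [hs]
        simp only [mul_zero, zero_mul, add_zero, zero_add]
        exact zero_pow (by omega)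
      have hxy : x ^ q * y = x * y ^ q := by
        linear_combination hs0 - (x * y ^ q) * h2
      set t : F := x / y with ht
      have htq : t ^ q = t := by
        rw [ht, div_pow, div_eq_div_iff (pow_ne_zero q hy) hy, hxy]
      have h := hind 1 t (by simp) htq
        (by rw [ht, one_mul, div_mul_cancel₀ x hy]; linear_combination x * h2)
        (by ring)
      exact one_ne_zero h.1
    · -- y0 = 0, x0 ≠ 0 : set r = x / u
      subst hy0'
      have hy : y ≠ 0 := hyne rfl
      have hu : (x * 0 + x0 * y) ≠ 0 := by
        intro h; exact hx0' (hu0 h).2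
      set u : F := x * 0 + x0 * y with hudef
      have huqne : u ^ q ≠ 0 := pow_ne_zero q hu
      set r : F := x / u with hr
      have hrq : r + r ^ q = x0 := by
        rw [hr, div_pow, div_add_div _ _ hu huqne, div_eq_iff (mul_ne_zero hu huqne)]
        calc x * u ^ q + u * x ^ q
            = x * (x ^ q * 0 + x0 * y ^ q) + u * x ^ q := by rw [huq]
          _ = x0 * (x * y ^ q + x ^ q * y) := by rw [hudef]; ring
          _ = x0 * u ^ (q + 1) := by rw [hs]
          _ = x0 * (u * u ^ q) := by rw [pow_succ]; ring
      exact hx0' (keyTrace k q n hq hn hcard r x0 hx0 hrq)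
  · -- y0 ≠ 0 : set r = y / u
    have hu : (x * y0 + x0 * y) ≠ 0 := by
      intro h; exact hy0' (hu0 h).1
    set u : F := x * y0 + x0 * y with hudef
    have huqne : u ^ q ≠ 0 := pow_ne_zero q hu
    set r : F := y / u with hr
    have hrq : r + r ^ q = y0 := by
      rw [hr, div_pow, div_add_div _ _ hu huqne, div_eq_iff (mul_ne_zero hu huqne)]
      calc y * u ^ q + u * y ^ q
          = y * (x ^ q * y0 + x0 * y ^ q) + u * y ^ q := by rw [huq]
        _ = y0 * (x * y ^ q + x ^ q * y) + (x0 * y * y ^ q) * 2 := by rw [hudef]; ring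
        _ = y0 * u ^ (q + 1) := by rw [hs, h2]; ring
        _ = y0 * (u * u ^ q) := by rw [pow_succ]; ring
    exact hy0' (keyTrace k q n hq hn hcard r y0 hy0 hrq)

theorem stmt13 (k n : ℕ) (hk : Odd k) (hn : Odd n) (hn3 : 3 ≤ n)
    (q : ℕ) (hq : q = 2 ^ k)
    (F : Type) [Field F] [Fintype F] (hF : Fintype.card F = q ^ n)
    (x y x0 y0 : F) (hx0 : x0 ^ q = x0) (hy0 : y0 ^ q = y0)
    (hind : IndepPair q x x0 y y0)
    (lam : F) (hlam : lam ^ q = lam) (h0 : lam ≠ 0) (h1 : lam ≠ 1) :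
    Dform q (lam * x) (lam * x0) y y0 ≠ Dform q x x0 y y0 := by
  have hk0 : k ≠ 0 := by rintro rfl; exact (Nat.not_odd_iff_even.mpr Even.zero) hk
  haveI : CharP F 2 := charTwoAux (k * n)
    (Nat.mul_ne_zero hk0 (by omega)) (by rw [hF, hq, ← pow_mul])
  have h2 : (2 : F) = 0 := by exact_mod_cast (CharP.cast_eq_zero F 2)
  have frob : ∀ a b : F, (a + b) ^ q = a ^ q + b ^ q := by
    intro a b
    rw [hq]
    exact add_pow_char_pow a b 2 k
  intro hEq
  set μ : F := lam + 1 with hμ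
  have hμq : μ ^ q = μ := by rw [hμ, frob, hlam, one_pow]
  have hμ0 : μ ≠ 0 := by
    intro h
    apply h1
    have h' : lam = -1 := eq_neg_of_add_eq_zero_left h
    rwa [CharTwo.neg_eq] at h'
  have hX0 : (μ * x0) ^ q = μ * x0 := by rw [mul_pow, hμq, hx0]
  have hindμ : IndepPair q (μ * x) (μ * x0) y y0 := by
    intro a b ha hb hab1 hab2
    have h := hind (a * μ) b (by rw [mul_pow, ha, hμq]) hb
      (by linear_combination hab1) (by linear_combination hab2)
    refine ⟨?_, h.2⟩
    rcases mul_eq_zero.mp h.1 with h' | h'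
    · exact h'
    · exact absurd h' hμ0
  have e1 : ∀ z : F, z ^ q = z → Dform q (z * x) (z * x0) y y0 =
      z * (x * y ^ q + x ^ q * y) + z ^ 2 * (x * y0 + x0 * y) ^ (q + 1) := by
    intro z hz
    unfold Dform
    rw [mul_pow z x, hz]
    have hfac : z * x * y0 + z * x0 * y = z * (x * y0 + x0 * y) := by ring
    rw [hfac, mul_pow]
    have hzp : z ^ (q + 1) = z ^ 2 := by rw [pow_succ, hz, sq]
    rw [hzp]
    ring
  rw [e1 lam hlam] at hEq
  unfold Dform at hEq
  apply nonvanish k q n hq hn hF (μ * x) (μ * x0) y y0 hX0 hy0 hindμ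
  rw [e1 μ hμq, hμ]
  linear_combination hEq + (x * y ^ q + x ^ q * y + (lam + 1) * (x * y0 + x0 * y) ^ (q + 1)) * h2
end

section
/- Let q = 2^k with k odd, n ≥ 3 odd. Every 2-dimensional F_q-subspace ℓ of V = F_{q^n} ⊕ F_q·w belongs to exactly q − 1 of the sets B_α, α ∈ F_{q^n}^×; equivalently, the set {D(b) : b a basis of ℓ} of values of the defining form over all bases of ℓ has exactly q − 1 elements, all nonzero. -/
/-! ### Auxiliary lemmas -/

open Polynomial in
lemma card_fixedField (F : Type) [Field F] [Fintype F] (q n k : ℕ) (hq : q = 2 ^ k)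
    (hk : k ≠ 0) (hn1 : 1 ≤ n) (hF : Fintype.card F = q ^ n) :
    {a : F | a ^ q = a}.ncard = q := by
  classical
  have hq1 : 1 < q := by rw [hq]; exact Nat.one_lt_two_pow hk
  have hqn1 : 1 < q ^ n := Nat.one_lt_pow (by omega) hq1
  obtain ⟨m, hm⟩ : (q - 1) ∣ (q ^ n - 1) := by
    simpa using Nat.sub_dvd_pow_sub_pow q 1 n
  have hdvd : (X ^ q - X : F[X]) ∣ X ^ (q ^ n) - X := by
    have e1 : (X ^ q - X : F[X]) = X * (X ^ (q-1) - 1) := by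
      rw [mul_sub, mul_one, ← pow_succ']
      congr 2
      omega
    have e2 : (X ^ (q^n) - X : F[X]) = X * (X ^ (q^n-1) - 1) := by
      rw [mul_sub, mul_one, ← pow_succ']
      congr 2
      omega
    have h3 : (X ^ (q-1) - 1 : F[X]) ∣ X ^ (q^n - 1) - 1 := by
      have := sub_dvd_pow_sub_pow ((X : F[X]) ^ (q-1)) 1 m
      rwa [← pow_mul, one_pow, ← hm] at this
    rw [e1, e2]
    exact mul_dvd_mul_left X h3
  have hroots_g : (X ^ (q ^ n) - X : F[X]).roots = Finset.univ.val := by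
    rw [← hF]; exact FiniteField.roots_X_pow_card_sub_X F
  have hg0 : (X ^ (q ^ n) - X : F[X]) ≠ 0 := FiniteField.X_pow_card_sub_X_ne_zero F hqn1
  have hf0 : (X ^ q - X : F[X]) ≠ 0 := FiniteField.X_pow_card_sub_X_ne_zero F hq1
  have hgsplit : Splits (X ^ (q ^ n) - X : F[X]) := by
    rw [splits_iff_card_roots, hroots_g, FiniteField.X_pow_card_sub_X_natDegree_eq F hqn1]
    simpa using hF
  have hfsplit := Splits.of_dvd hgsplit hg0 hdvd
  have hcard : Multiset.card (X ^ q - X : F[X]).roots = q := by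
    rw [splits_iff_card_roots.mp hfsplit, FiniteField.X_pow_card_sub_X_natDegree_eq F hq1]
  have hnodup : (X ^ q - X : F[X]).roots.Nodup := by
    refine Multiset.nodup_of_le (Polynomial.roots.le_of_dvd hg0 hdvd) ?_
    rw [hroots_g]; exact Finset.univ.nodup
  have hset : {a : F | a ^ q = a} = ↑(X ^ q - X : F[X]).roots.toFinset := by
    ext a
    simp [Polynomial.mem_roots hf0, Polynomial.IsRoot, sub_eq_zero]
  rw [hset, Set.ncard_coe_finset, Multiset.toFinset_card_of_nodup hnodup, hcard]

lemma no_AS_solution (F : Type) [Field F] [Fintype F] [CharP F 2] (q n k : ℕ)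
    (hq : q = 2 ^ k) (hn : Odd n) (hF : Fintype.card F = q ^ n)
    (c : F) (hc : c ^ q = c) (hc0 : c ≠ 0) (v : F) : v ^ q + v ≠ c := by
  intro h
  set T : F → F := fun z => ∑ i ∈ Finset.range n, z ^ q ^ i with hT
  have hTadd : ∀ a b : F, T (a + b) = T a + T b := by
    intro a b
    rw [hT]; simp only
    rw [← Finset.sum_add_distrib]
    refine Finset.sum_congr rfl fun i _ => ?_
    rw [hq, ← pow_mul]
    exact add_pow_char_pow a b 2 (k * i)
  have hvq : v ^ q ^ n = v := by
    rw [← hF]; exact FiniteField.pow_card v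
  have hTfrob : T (v ^ q) = T v := by
    have h1 : ∀ i, (v ^ q) ^ q ^ i = v ^ q ^ (i + 1) := by
      intro i; rw [← pow_mul, ← pow_succ']
    have h2 : T (v ^ q) + v ^ q ^ 0 = T v + v ^ q ^ n := by
      rw [hT]; simp only
      rw [Finset.sum_congr rfl fun i _ => h1 i]
      exact (Finset.sum_range_succ' (fun i => v ^ q ^ i) n).symm.trans
        (Finset.sum_range_succ (fun i => v ^ q ^ i) n)
    rw [pow_zero, pow_one, hvq] at h2
    exact add_right_cancel h2
  have hTc : T c = c := by
    have hci : ∀ i, c ^ q ^ i = c := by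
      intro i; induction i with
      | zero => simp
      | succ i ih => rw [pow_succ, pow_mul, ih, hc]
    rw [hT]; simp only
    rw [Finset.sum_congr rfl fun i _ => hci i, Finset.sum_const, Finset.card_range]
    obtain ⟨m, hm⟩ := hn
    rw [nsmul_eq_mul, hm]
    push_cast
    have h2 : (2 : F) = 0 := by exact_mod_cast CharP.cast_eq_zero F 2
    rw [h2]; ring
  have : c = 0 := by
    have := hTadd (v ^ q) v
    rw [h, hTfrob, hTc] at this
    have h2 : (2 : F) = 0 := by exact_mod_cast CharP.cast_eq_zero F 2
    rw [this]; linear_combination (T v) * h2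
  exact hc0 this

lemma keyD (F : Type) [Field F] [Fintype F] [CharP F 2] (q n k : ℕ) (hq : q = 2^k)
    (hn : Odd n) (hF : Fintype.card F = q ^ n)
    (x x0 y y0 : F) (hx0 : x0 ^ q = x0) (hy0 : y0 ^ q = y0)
    (hy0ne : y0 ≠ 0) (hs : x * y0 + x0 * y ≠ 0) : Dform q x x0 y y0 ≠ 0 := by
  intro hD
  have h2F : (2 : F) = 0 := by exact_mod_cast CharP.cast_eq_zero F 2
  have frobq : ∀ a b : F, (a + b) ^ q = a ^ q + b ^ q := by
    intro a b; rw [hq]; exact add_pow_char_pow a b 2 k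
  obtain ⟨s, hsdef⟩ : ∃ s : F, s = x * y0 + x0 * y := ⟨_, rfl⟩
  rw [← hsdef] at hs
  have hsq : s ^ q = x ^ q * y0 + x0 * y ^ q := by
    rw [hsdef, frobq, mul_pow, mul_pow, hx0, hy0]
  have hA : x * y ^ q + x ^ q * y = s ^ q * s := by
    unfold Dform at hD
    rw [pow_succ, ← hsdef] at hD
    linear_combination hD - s ^ q * s * h2F
  have hsqne : s ^ q ≠ 0 := pow_ne_zero _ hs
  have hnum : y ^ q * s + y * s ^ q = y0 * (s ^ q * s) := by
    linear_combination y ^ q * hsdef + y * hsq + y0 * hA + (x0 * y * y ^ q) * h2F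
  have hv : (y * s⁻¹) ^ q + y * s⁻¹ = y0 := by
    rw [mul_pow, inv_pow]
    field_simp
    linear_combination hnum
  exact no_AS_solution F q n k hq hn hF y0 hy0 hy0ne _ hv

lemma Dne (F : Type) [Field F] [Fintype F] [CharP F 2] (q n k : ℕ) (hq : q = 2^k)
    (hn : Odd n) (hF : Fintype.card F = q ^ n)
    (x x0 y y0 : F) (hx0 : x0 ^ q = x0) (hy0 : y0 ^ q = y0)
    (hind : IndepPair q x x0 y y0) : Dform q x x0 y y0 ≠ 0 := by
  have h2F : (2 : F) = 0 := by exact_mod_cast CharP.cast_eq_zero F 2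
  have hq0 : q ≠ 0 := by rw [hq]; positivity
  by_cases hs : x * y0 + x0 * y = 0
  · obtain ⟨hy00, hx00⟩ := hind y0 x0 hy0 hx0
      (by linear_combination hs) (by linear_combination x0 * y0 * h2F)
    intro hD
    unfold Dform at hD
    rw [hx00, hy00] at hD
    simp only [mul_zero, zero_mul, add_zero, zero_add] at hD
    rw [zero_pow (by omega : q + 1 ≠ 0), add_zero] at hD
    have hxne : x ≠ 0 := by
      intro hx
      have := hind 1 0 (one_pow q) (zero_pow hq0)
        (by rw [hx]; ring) (by rw [hx00, hy00]; ring)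
      exact one_ne_zero this.1
    have hcq : (y * x⁻¹) ^ q = y * x⁻¹ := by
      rw [mul_pow, inv_pow]
      have hxq : x ^ q ≠ 0 := pow_ne_zero _ hxne
      field_simp
      linear_combination hD - (x ^ q * y) * h2F
    have := hind (y * x⁻¹) 1 hcq (one_pow q)
      (by field_simp; linear_combination y * h2F) (by rw [hx00, hy00]; ring)
    exact one_ne_zero this.2
  · by_cases hy0ne : y0 ≠ 0
    · exact keyD F q n k hq hn hF x x0 y y0 hx0 hy0 hy0ne hs
    · push_neg at hy0ne
      have hx0ne : x0 ≠ 0 := by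
        intro hx00
        exact hs (by rw [hx00, hy0ne]; ring)
      have hswap : Dform q y y0 x x0 = Dform q x x0 y y0 := by
        unfold Dform; ring
      rw [← hswap]
      exact keyD F q n k hq hn hF y y0 x x0 hy0 hx0 hx0ne
        (by intro h; exact hs (by linear_combination h))

theorem stmt14 (k n : ℕ) (hk : Odd k) (hn : Odd n) (hn3 : 3 ≤ n)
    (q : ℕ) (hq : q = 2 ^ k)
    (F : Type) [Field F] [Fintype F] (hF : Fintype.card F = q ^ n)
    (x y x0 y0 : F) (hx0 : x0 ^ q = x0) (hy0 : y0 ^ q = y0)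
    (hind : IndepPair q x x0 y y0) :
    {α : F | lineSpan q (x, x0) (y, y0) ∈ Bset q α}.ncard = q - 1 ∧
      lineSpan q (x, x0) (y, y0) ∉ Bset q 0 := by
  have hk0 : k ≠ 0 := by rintro rfl; simp [Nat.odd_iff] at hk
  have hq1 : 1 < q := by rw [hq]; exact Nat.one_lt_two_pow hk0
  have hq0 : q ≠ 0 := by omega
  have hn1 : 1 ≤ n := by omega
  -- characteristic 2
  have hcard2 : Fintype.card F = 2 ^ (k * n) := by rw [hF, hq, ← pow_mul]
  haveI hchar : CharP F 2 := by
    obtain ⟨m, hp, hm⟩ := FiniteField.card F (ringChar F)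
    refine ringChar.of_eq ?_
    have hdvd : ringChar F ∣ 2 ^ (k * n) := by
      rw [← hcard2, hm]
      exact dvd_pow_self _ m.ne_zero
    exact (Nat.prime_dvd_prime_iff_eq hp Nat.prime_two).mp (hp.dvd_of_dvd_pow hdvd)
  have h2F : (2 : F) = 0 := by exact_mod_cast CharP.cast_eq_zero F 2
  have frobq : ∀ a b : F, (a + b) ^ q = a ^ q + b ^ q := by
    intro a b; rw [hq]; exact add_pow_char_pow a b 2 k
  set A : F := x * y ^ q + x ^ q * y with hA
  set C : F := (x * y0 + x0 * y) ^ (q + 1) with hC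
  set f : F → F := fun d => d * A + d ^ 2 * C with hf
  set S : Set F := {a : F | a ^ q = a} with hS
  -- scaled independence and nonvanishing
  have hNV : ∀ e : F, e ^ q = e → e ≠ 0 → f e ≠ 0 := by
    intro e he he0
    have hinde : IndepPair q (e * x) (e * x0) y y0 := by
      intro a b ha hb h1 h2
      have := hind (a * e) b (by rw [mul_pow, ha, he]) hb
        (by linear_combination h1) (by linear_combination h2)
      exact ⟨by
        rcases mul_eq_zero.mp this.1 with h | h
        · exact h
        · exact absurd h he0, this.2⟩
    have he2 : e ^ (q + 1) = e ^ 2 := by rw [pow_succ, he, sq]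
    have hDval : Dform q (e * x) (e * x0) y y0 = f e := by
      unfold Dform
      have h1 : e * x * y0 + e * x0 * y = e * (x * y0 + x0 * y) := by ring
      rw [h1, mul_pow, mul_pow, he, he2]
      simp only [hf, hA, hC]
      ring
    rw [← hDval]
    exact Dne F q n k hq hn hF (e * x) (e * x0) y y0
      (by rw [mul_pow, he, hx0]) hy0 hinde
  -- forward direction: any Bset value is f e for some e in S, e ≠ 0
  have hforward : ∀ α : F, lineSpan q (x, x0) (y, y0) ∈ Bset q α →
      ∃ e : F, e ^ q = e ∧ e ≠ 0 ∧ f e = α := by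
    intro α hmem
    obtain ⟨x', x0', y', y0', hx0', hy0', hind', hline, hval⟩ := hmem
    have hm1 : (x', x0') ∈ lineSpan q (x, x0) (y, y0) := by
      rw [hline]
      exact ⟨1, 0, one_pow q, zero_pow hq0, by simp⟩
    have hm2 : (y', y0') ∈ lineSpan q (x, x0) (y, y0) := by
      rw [hline]
      exact ⟨0, 1, zero_pow hq0, one_pow q, by simp⟩
    obtain ⟨a, b, ha, hb, hab⟩ := hm1
    obtain ⟨c, d, hc, hd, hcd⟩ := hm2
    simp only [Prod.mk.injEq] at hab hcd
    obtain ⟨hx'1, hx0'1⟩ := hab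
    obtain ⟨hy'1, hy0'1⟩ := hcd
    set e : F := a * d + b * c with he_def
    have he : e ^ q = e := by
      rw [he_def, frobq, mul_pow, mul_pow, ha, hb, hc, hd]
    have he0 : e ≠ 0 := by
      intro he0
      rw [he_def] at he0
      have h1 : d * x' + b * y' = 0 := by
        rw [hx'1, hy'1]
        linear_combination x * he0 + b * d * y * h2F
      have h2 : d * x0' + b * y0' = 0 := by
        rw [hx0'1, hy0'1]
        linear_combination x0 * he0 + b * d * y0 * h2F
      obtain ⟨hd0, hb0⟩ := hind' d b hd hb h1 h2
      have h3 : c * x' + a * y' = 0 := by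
        rw [hx'1, hy'1]
        linear_combination a * c * x * h2F + y * he0
      have h4 : c * x0' + a * y0' = 0 := by
        rw [hx0'1, hy0'1]
        linear_combination a * c * x0 * h2F + y0 * he0
      obtain ⟨hc0, ha0⟩ := hind' c a hc ha h3 h4
      have hx'z : x' = 0 := by rw [hx'1, ha0, hb0]; ring
      have hy'z : y' = 0 := by rw [hy'1, hc0, hd0]; ring
      have hx0'z : x0' = 0 := by rw [hx0'1, ha0, hb0]; ring
      have hy0'z : y0' = 0 := by rw [hy0'1, hc0, hd0]; ring
      have := hind' 1 0 (one_pow q) (zero_pow hq0)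
        (by rw [hx'z, hy'z]; ring) (by rw [hx0'z, hy0'z]; ring)
      exact one_ne_zero this.1
    refine ⟨e, he, he0, ?_⟩
    rw [← hval, hx'1, hx0'1, hy'1, hy0'1]
    -- Dform of transformed basis equals e*A + e^2*C
    have hqx : (a * x + b * y) ^ q = a * x ^ q + b * y ^ q := by
      rw [frobq, mul_pow, mul_pow, ha, hb]
    have hqy : (c * x + d * y) ^ q = c * x ^ q + d * y ^ q := by
      rw [frobq, mul_pow, mul_pow, hc, hd]
    have hinner : (a * x + b * y) * (c * x0 + d * y0) + (a * x0 + b * y0) * (c * x + d * y)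
        = e * (x * y0 + x0 * y) := by
      rw [he_def]
      linear_combination (a * c * x * x0 + b * d * y * y0) * h2F
    have he2 : e ^ (q + 1) = e ^ 2 := by rw [pow_succ, he, sq]
    unfold Dform
    rw [hqx, hqy, hinner, mul_pow, he2]
    simp only [hf, hA, hC]
    linear_combination -(a * c * x * x ^ q + b * d * y * y ^ q) * h2F
  constructor
  · -- cardinality
    have hTeq : {α : F | lineSpan q (x, x0) (y, y0) ∈ Bset q α} = f '' (S \ {0}) := by
      ext α
      constructor
      · intro hmem
        obtain ⟨e, he, he0, hfe⟩ := hforward α hmem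
        exact ⟨e, ⟨he, he0⟩, hfe⟩
      · rintro ⟨e, ⟨heS, he0⟩, rfl⟩
        have he : e ^ q = e := heS
        have he0' : e ≠ 0 := he0
        refine ⟨e * x, e * x0, y, y0, by rw [mul_pow, he, hx0], hy0, ?_, ?_, ?_⟩
        · intro a b ha hb h1 h2
          have := hind (a * e) b (by rw [mul_pow, ha, he]) hb
            (by linear_combination h1) (by linear_combination h2)
          exact ⟨by
            rcases mul_eq_zero.mp this.1 with h | h
            · exact h
            · exact absurd h he0', this.2⟩
        · -- lineSpan invariance under scaling
          ext p
          constructor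
          · rintro ⟨a, b, ha, hb, hp⟩
            refine ⟨a * e⁻¹, b, ?_, hb, ?_⟩
            · rw [mul_pow, ha, inv_pow, he]
            · rw [hp]
              rw [Prod.mk.injEq]
              constructor <;> field_simp <;> ring
          · rintro ⟨a, b, ha, hb, hp⟩
            refine ⟨a * e, b, by rw [mul_pow, ha, he], hb, ?_⟩
            rw [hp]
            rw [Prod.mk.injEq]
            constructor <;> ring
        · unfold Dform
          have he2 : e ^ (q + 1) = e ^ 2 := by rw [pow_succ, he, sq]
          have h1 : e * x * y0 + e * x0 * y = e * (x * y0 + x0 * y) := by ring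
          rw [h1, mul_pow, mul_pow, he, he2]
          simp only [hf, hA, hC]
          ring
    rw [hTeq]
    have hinj : Set.InjOn f (S \ {0}) := by
      rintro d1 ⟨h1S, h10⟩ d2 ⟨h2S, h20⟩ heq
      by_contra hne
      have hε0 : d1 + d2 ≠ 0 := fun h0 => hne (by linear_combination h0 - d2 * h2F)
      have hεq : (d1 + d2) ^ q = d1 + d2 := by
        rw [frobq, h1S, h2S]
      apply hNV (d1 + d2) hεq hε0
      rw [hf]; simp only
      rw [hf] at heq; simp only at heq
      linear_combination heq + (d2 * A + (d2 ^ 2 + d1 * d2) * C) * h2F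
    rw [Set.ncard_image_of_injOn hinj]
    have h0S : (0 : F) ∈ S := by
      rw [hS]; exact zero_pow hq0
    rw [Set.ncard_diff_singleton_of_mem h0S]
    rw [hS, card_fixedField F q n k hq hk0 hn1 hF]
  · -- 0 is not a value
    intro hmem
    obtain ⟨e, he, he0, hfe⟩ := hforward 0 hmem
    exact hNV e he he0 hfe
end

section
/- Let q = 2^k with k odd, n ≥ 3 odd, and β ∈ F_{q^n}^×. The F_q-linear map g_β on V = F_{q^n} ⊕ F_q·w defined by g_β(x + x₀w) = βx + x₀w maps B_α onto B_{α·β^(q+1)} for each α ∈ F_{q^n}^×. -/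
private lemma dscale {F : Type} [Field F] (q : ℕ) (β x x0 y y0 : F) :
    Dform q (β * x) x0 (β * y) y0 = β ^ (q + 1) * Dform q x x0 y y0 := by
  have h : β * x * y0 + x0 * (β * y) = β * (x * y0 + x0 * y) := by ring
  simp only [Dform, h, mul_pow, pow_succ]
  ring

private lemma lscale {F : Type} [Field F] (q : ℕ) (β x x0 y y0 : F) :
    (fun p : F × F => (β * p.1, p.2)) '' lineSpan q (x, x0) (y, y0)
      = lineSpan q (β * x, x0) (β * y, y0) := by
  ext p
  constructor
  · rintro ⟨r, ⟨a, b, ha, hb, hr⟩, rfl⟩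
    exact ⟨a, b, ha, hb, by simp [hr]; ring⟩
  · rintro ⟨a, b, ha, hb, hp⟩
    exact ⟨(a * x + b * y, a * x0 + b * y0), ⟨a, b, ha, hb, rfl⟩, by simp [hp]; ring⟩

private lemma iscale {F : Type} [Field F] (q : ℕ) (β : F) (hβ : β ≠ 0) (x x0 y y0 : F)
    (h : IndepPair q x x0 y y0) : IndepPair q (β * x) x0 (β * y) y0 := by
  intro a b ha hb h1 h2
  apply h a b ha hb _ h2
  have : β * (a * x + b * y) = 0 := by rw [← h1]; ring
  exact (mul_eq_zero.1 this).resolve_left hβ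

theorem stmt15 (k n : ℕ) (hk : Odd k) (hn : Odd n) (hn3 : 3 ≤ n)
    (q : ℕ) (hq : q = 2 ^ k)
    (F : Type) [Field F] [Fintype F] (hF : Fintype.card F = q ^ n)
    (β : F) (hβ : β ≠ 0) (α : F) (hα : α ≠ 0) :
    (fun ℓ : Set (F × F) => (fun p : F × F => (β * p.1, p.2)) '' ℓ) '' Bset q α
      = Bset q (α * β ^ (q + 1)) := by
  have hβp : β ^ (q + 1) ≠ 0 := pow_ne_zero _ hβ
  ext ℓ
  constructor
  · rintro ⟨ℓ₀, ⟨x, x0, y, y0, hx0, hy0, hi, rfl, hD⟩, rfl⟩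
    exact ⟨β * x, x0, β * y, y0, hx0, hy0, iscale q β hβ x x0 y y0 hi,
      by exact lscale q β x x0 y y0, by rw [dscale, hD]; ring⟩
  · rintro ⟨X, x0, Y, y0, hx0, hy0, hi, rfl, hD⟩
    refine ⟨lineSpan q (β⁻¹ * X, x0) (β⁻¹ * Y, y0),
      ⟨β⁻¹ * X, x0, β⁻¹ * Y, y0, hx0, hy0, ?_, rfl, ?_⟩, ?_⟩
    · exact iscale q β⁻¹ (inv_ne_zero hβ) X x0 Y y0 hi
    · have := dscale q β (β⁻¹ * X) x0 (β⁻¹ * Y) y0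
      rw [← mul_assoc, mul_inv_cancel₀ hβ, one_mul, ← mul_assoc, mul_inv_cancel₀ hβ,
        one_mul, hD] at this
      exact mul_left_cancel₀ hβp (this.symm.trans (mul_comm α _))
    · show (fun p : F × F => (β * p.1, p.2)) '' lineSpan q (β⁻¹ * X, x0) (β⁻¹ * Y, y0) = _
      rw [lscale, ← mul_assoc, mul_inv_cancel₀ hβ, one_mul, ← mul_assoc,
        mul_inv_cancel₀ hβ, one_mul]
end

section
/- Let q = 2^k with k odd and n odd. Then the polynomial x^q + x + c over F_{q^n} either has exactly q roots in F_{q^n} or none, and x^q + x + 1 factors over F_{q^n} into q/2 irreducible quadratic factors (in particular has no roots). -/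
open Polynomial

private lemma ppfix18 {M : Type*} [Monoid M] (a : M) (t : ℕ) (h : a ^ t = a) :
    ∀ i, a ^ t ^ i = a
  | 0 => by simp
  | (i + 1) => by rw [pow_succ, pow_mul, ppfix18 a t h i, h]

private lemma step18 {K : Type*} [Field K] [CharP K 2] (k q : ℕ) (hq : q = 2 ^ k)
    (x : K) (hx : x ^ q + x + 1 = 0) : x ^ q = x + 1 ∧ x ^ q ^ 2 = x := by
  have h1 : x ^ q = x + 1 := by
    linear_combination hx - CharTwo.add_self_eq_zero x - CharTwo.add_self_eq_zero (1 : K)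
  refine ⟨h1, ?_⟩
  have hfr : (x + 1) ^ q = x ^ q + 1 ^ q := by subst hq; exact add_pow_char_pow x 1 2 k
  calc x ^ q ^ 2 = (x ^ q) ^ q := by rw [pow_two, pow_mul]
    _ = (x + 1) ^ q := by rw [h1]
    _ = x ^ q + 1 := by rw [hfr, one_pow]
    _ = x := by rw [h1, add_assoc, CharTwo.add_self_eq_zero, add_zero]

private lemma noroot18 (k n q : ℕ) (hn : Odd n) (hq : q = 2 ^ k)
    (F : Type) [Field F] [Fintype F] [CharP F 2] (hF : Fintype.card F = q ^ n) :
    ∀ x : F, x ^ q + x + 1 ≠ 0 := by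
  intro x hx
  obtain ⟨h1, h2⟩ := step18 k q hq x hx
  obtain ⟨m, hm⟩ := hn
  have e : q ^ n = (q ^ 2) ^ m * q := by rw [hm, ← pow_mul, ← pow_succ]
  have hxx : x ^ q ^ n = x + 1 := by
    rw [e, pow_mul, ppfix18 x (q ^ 2) h2 m, h1]
  rw [← hF, FiniteField.pow_card] at hxx
  exact one_ne_zero (left_eq_add.mp hxx)

private lemma kernel18 (k n q : ℕ) (hk : 0 < k) (hn : 0 < n) (hq : q = 2 ^ k)
    (F : Type) [Field F] [Fintype F] [CharP F 2] (hF : Fintype.card F = q ^ n) :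
    {x : F | x ^ q = x}.ncard = q := by
  classical
  have hq1 : 1 < q := by rw [hq]; exact Nat.one_lt_pow hk.ne' one_lt_two
  have hqn1 : 1 < q ^ n := Nat.one_lt_pow hn.ne' hq1
  obtain ⟨m, hm⟩ : q - 1 ∣ q ^ n - 1 := by simpa using Nat.sub_dvd_pow_sub_pow q 1 n
  have h2 : ((X : F[X]) ^ (q - 1) - 1) ∣ (X ^ (q ^ n - 1) - 1) := by
    have h := sub_dvd_pow_sub_pow ((X : F[X]) ^ (q - 1)) 1 m
    rwa [one_pow, ← pow_mul, ← hm] at h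
  have key : ∀ r : ℕ, 0 < r → (X : F[X]) ^ r - X = X * (X ^ (r - 1) - 1) := by
    intro r hr
    have hr1 : r - 1 + 1 = r := by omega
    rw [mul_sub, mul_one, ← pow_succ', hr1]
  have hdvd : ((X : F[X]) ^ q - X) ∣ (X ^ (q ^ n) - X) := by
    rw [key q (by omega), key (q ^ n) (by omega)]
    exact mul_dvd_mul_left X h2
  have hbigne : ((X : F[X]) ^ (q ^ n) - X) ≠ 0 :=
    FiniteField.X_pow_card_sub_X_ne_zero F hqn1
  have hbigsplits : Splits ((X : F[X]) ^ (q ^ n) - X) := by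
    rw [← hF, splits_iff_card_roots, FiniteField.roots_X_pow_card_sub_X,
      FiniteField.X_pow_card_sub_X_natDegree_eq F (hF ▸ hqn1)]
    simp [Finset.card_univ]
  have hsep : ((X : F[X]) ^ q - X).Separable := by
    have hdq : (2 : ℕ) ∣ q := hq ▸ dvd_pow_self 2 hk.ne'
    exact galois_poly_separable 2 q hdq
  have hsplits : Splits ((X : F[X]) ^ q - X) :=
    hbigsplits.of_dvd hbigne hdvd
  have hdeg : ((X : F[X]) ^ q - X).natDegree = q :=
    FiniteField.X_pow_card_sub_X_natDegree_eq F hq1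
  have hne : ((X : F[X]) ^ q - X) ≠ 0 := FiniteField.X_pow_card_sub_X_ne_zero F hq1
  have hsetsimp : {x : F | x ^ q = x} = ↑((X : F[X]) ^ q - X).roots.toFinset := by
    ext x
    simp [Multiset.mem_toFinset, mem_roots, hne, IsRoot, sub_eq_zero]
  have hcard : Multiset.card ((X : F[X]) ^ q - X).roots = q := by
    have := hsplits.natDegree_eq_card_roots
    omega
  rw [hsetsimp, Set.ncard_coe_finset, Multiset.toFinset_card_of_nodup (nodup_roots hsep), hcard]

private lemma factordeg18 (k n q : ℕ) (hn : Odd n) (hk : 0 < k) (hq : q = 2 ^ k)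
    (F : Type) [Field F] [Fintype F] [CharP F 2] (hF : Fintype.card F = q ^ n)
    (g : F[X]) (hg : Irreducible g) (hgdvd : g ∣ X ^ q + X + 1) : g.natDegree = 2 := by
  classical
  have hq1 : 1 < q := by rw [hq]; exact Nat.one_lt_pow hk.ne' one_lt_two
  have hqn1 : 1 < q ^ n := Nat.one_lt_pow hn.pos.ne' hq1
  haveI : Fact (Irreducible g) := ⟨hg⟩
  haveI : CharP (AdjoinRoot g) 2 :=
    charP_of_injective_algebraMap (algebraMap F (AdjoinRoot g)).injective 2
  set α := AdjoinRoot.root g with hα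
  have hroot : α ^ q + α + 1 = 0 := by
    have h : (Polynomial.aeval α) ((X : F[X]) ^ q + X + 1) = 0 := by
      rw [hα, AdjoinRoot.aeval_eq, AdjoinRoot.mk_eq_zero]; exact hgdvd
    simpa using h
  obtain ⟨h1, h2⟩ := step18 k q hq α hroot
  have hg0 : g ≠ 0 := hg.ne_zero
  let pb := AdjoinRoot.powerBasis hg0
  haveI : Module.Finite F (AdjoinRoot g) := Module.Finite.of_basis pb.basis
  haveI : Finite (AdjoinRoot g) := Module.finite_of_finite F
  haveI := Fintype.ofFinite (AdjoinRoot g)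
  have hcardK : Fintype.card (AdjoinRoot g) = (q ^ n) ^ g.natDegree := by
    rw [Module.card_fintype pb.basis, hF, Fintype.card_fin]
    rfl
  -- every element of AdjoinRoot g is fixed by x ↦ x ^ (q^n)^2
  have hN2 : (2 : ℕ) ^ (k * (2 * n)) = (q ^ n) ^ 2 := by
    subst hq; rw [show k * (2 * n) = k * n * 2 by ring, pow_mul, pow_mul]
  have hN2' : (2 : ℕ) ^ (k * (2 * n)) = (q ^ 2) ^ n := by
    subst hq; rw [show k * (2 * n) = k * 2 * n by ring, pow_mul, pow_mul]
  let ψ : AdjoinRoot g →ₐ[F] AdjoinRoot g :=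
    { iterateFrobenius (AdjoinRoot g) 2 (k * (2 * n)) with
      commutes' := fun a => by
        simp only [RingHom.toMonoidHom_eq_coe, OneHom.toFun_eq_coe, MonoidHom.toOneHom_coe,
          MonoidHom.coe_coe]
        rw [iterateFrobenius_def, ← map_pow, hN2, ← hF, FiniteField.pow_card_pow] }
  have hψdef : ∀ x : AdjoinRoot g, ψ x = x ^ 2 ^ (k * (2 * n)) := fun x => rfl
  have hψα : ψ α = α := by
    rw [hψdef, hN2']
    exact ppfix18 α (q ^ 2) h2 n
  have htop : ∀ x : AdjoinRoot g, ψ x = x := by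
    have hle : (⊤ : Subalgebra F (AdjoinRoot g)) ≤ AlgHom.equalizer ψ (AlgHom.id F _) := by
      rw [← AdjoinRoot.adjoinRoot_eq_top]
      rw [Algebra.adjoin_le_iff, Set.singleton_subset_iff]
      exact hψα
    intro x
    exact hle (show x ∈ ⊤ from trivial)
  have hallroot : ∀ x : AdjoinRoot g, x ^ ((q ^ n) ^ 2) = x := by
    intro x
    have := htop x
    rwa [hψdef, hN2] at this
  have hNN : 1 < (q ^ n) ^ 2 := Nat.one_lt_pow (by norm_num) hqn1
  have hKne : ((X : (AdjoinRoot g)[X]) ^ ((q ^ n) ^ 2) - X) ≠ 0 :=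
    FiniteField.X_pow_card_sub_X_ne_zero _ hNN
  have hfc : Fintype.card (AdjoinRoot g) ≤ (q ^ n) ^ 2 := by
    have hsub : (Finset.univ : Finset (AdjoinRoot g)) ⊆
        ((X : (AdjoinRoot g)[X]) ^ ((q ^ n) ^ 2) - X).roots.toFinset := by
      intro x _
      rw [Multiset.mem_toFinset, mem_roots hKne]
      simp [IsRoot, hallroot x]
    calc Fintype.card (AdjoinRoot g) = (Finset.univ : Finset (AdjoinRoot g)).card :=
          Finset.card_univ.symm
      _ ≤ ((X : (AdjoinRoot g)[X]) ^ ((q ^ n) ^ 2) - X).roots.toFinset.card :=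
          Finset.card_le_card hsub
      _ ≤ Multiset.card ((X : (AdjoinRoot g)[X]) ^ ((q ^ n) ^ 2) - X).roots :=
          Multiset.toFinset_card_le _
      _ ≤ ((X : (AdjoinRoot g)[X]) ^ ((q ^ n) ^ 2) - X).natDegree := card_roots' _
      _ = (q ^ n) ^ 2 := FiniteField.X_pow_card_sub_X_natDegree_eq _ hNN
  have hd2 : g.natDegree ≤ 2 := by
    rw [hcardK] at hfc
    exact (Nat.pow_le_pow_iff_right hqn1).mp hfc
  have hd1 : g.natDegree ≠ 1 := by
    intro h1d
    have hdeg1 : g.degree = 1 := by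
      rw [degree_eq_natDegree hg0, h1d]; rfl
    obtain ⟨a, ha⟩ := exists_root_of_degree_eq_one hdeg1
    obtain ⟨h, hh⟩ := hgdvd
    have hpa : (X ^ q + X + 1 : F[X]).eval a = 0 := by
      rw [hh, eval_mul, ha, zero_mul]
    have hpa' : a ^ q + a + 1 = 0 := by simpa using hpa
    exact noroot18 k n q hn hq F hF a hpa'
  have hd0 : 0 < g.natDegree := hg.natDegree_pos
  omega

open Polynomial in
theorem stmt18 (k n : ℕ) (hk : Odd k) (hn : Odd n)
    (q : ℕ) (hq : q = 2 ^ k)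
    (F : Type) [Field F] [Fintype F] (hF : Fintype.card F = q ^ n) :
    (∀ c : F, {x : F | x ^ q + x + c = 0}.ncard = q ∨ {x : F | x ^ q + x + c = 0} = ∅) ∧
    (∃ s : Multiset (Polynomial F),
      (∀ p ∈ s, Irreducible p ∧ p.natDegree = 2) ∧
      Multiset.card s = q / 2 ∧
      (X ^ q + X + 1 : Polynomial F) = s.prod) ∧
    (∀ x : F, x ^ q + x + 1 ≠ 0) := by
  classical
  have hk0 : 0 < k := hk.pos
  have hq1 : 1 < q := by rw [hq]; exact Nat.one_lt_pow hk0.ne' one_lt_two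
  -- char 2
  haveI : CharP F (ringChar F) := ringChar.charP F
  have hprime : (ringChar F).Prime := CharP.char_is_prime F (ringChar F)
  have hdvd : ringChar F ∣ 2 ^ (k * n) := by
    have hcast : ((2 ^ (k * n) : ℕ) : F) = 0 := by
      rw [show (2 : ℕ) ^ (k * n) = Fintype.card F by rw [hF, hq, ← pow_mul]]
      exact FiniteField.cast_card_eq_zero F
    exact (ringChar.spec F _).mp hcast
  have hchar2 : ringChar F = 2 :=
    (Nat.prime_dvd_prime_iff_eq hprime Nat.prime_two).mp (hprime.dvd_of_dvd_pow hdvd)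
  haveI : CharP F 2 := hchar2 ▸ ringChar.charP F
  refine ⟨?_, ?_, noroot18 k n q hn hq F hF⟩
  · -- root counts
    intro c
    rcases Set.eq_empty_or_nonempty {x : F | x ^ q + x + c = 0} with h | ⟨x₀, hx₀⟩
    · exact Or.inr h
    · left
      have hx₀' : x₀ ^ q + x₀ + c = 0 := hx₀
      have himg : {x : F | x ^ q + x + c = 0} = (fun t => x₀ + t) '' {t : F | t ^ q = t} := by
        ext x
        simp only [Set.mem_setOf_eq, Set.mem_image]
        constructor
        · intro hx
          refine ⟨x + x₀, ?_, ?_⟩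
          · have hpow : (x + x₀) ^ q = x ^ q + x₀ ^ q := by
              subst hq; exact add_pow_char_pow x x₀ 2 k
            rw [hpow]
            linear_combination hx + hx₀' - CharTwo.add_self_eq_zero x -
              CharTwo.add_self_eq_zero x₀ - CharTwo.add_self_eq_zero c
          · linear_combination CharTwo.add_self_eq_zero x₀
        · rintro ⟨t, ht, rfl⟩
          have hpow : (x₀ + t) ^ q = x₀ ^ q + t ^ q := by
            subst hq; exact add_pow_char_pow x₀ t 2 k
          rw [hpow]
          linear_combination hx₀' + ht + CharTwo.add_self_eq_zero t
      rw [himg, Set.ncard_image_of_injective _ (add_right_injective x₀)]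
      exact kernel18 k n q hk0 hn.pos hq F hF
  · -- factorization
    set p : F[X] := X ^ q + X + 1 with hp
    have hdegX : ((X : F[X]) + 1).degree < ((X : F[X]) ^ q).degree := by
      rw [degree_X_pow]
      have h1 : ((X : F[X]) + 1).degree = 1 := by
        simpa using degree_X_add_C (1 : F)
      rw [h1]
      exact_mod_cast hq1
    have hmono : p.Monic := by
      rw [hp, add_assoc]
      exact (monic_X_pow q).add_of_left hdegX
    have hpdeg : p.degree = q := by
      rw [hp, add_assoc, degree_add_eq_left_of_degree_lt hdegX, degree_X_pow]
    have hpnat : p.natDegree = q := natDegree_eq_of_degree_eq_some hpdeg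
    have hp0 : p ≠ 0 := hmono.ne_zero
    have hassoc := UniqueFactorizationMonoid.prod_normalizedFactors hp0
    have hmonicfactors : ∀ g ∈ UniqueFactorizationMonoid.normalizedFactors p, g.Monic := by
      intro g hgm
      have hnorm := UniqueFactorizationMonoid.normalize_normalized_factor g hgm
      rw [← hnorm]
      exact monic_normalize
        (UniqueFactorizationMonoid.irreducible_of_normalized_factor g hgm).ne_zero
    have hprodmonic : (UniqueFactorizationMonoid.normalizedFactors p).prod.Monic := by
      have h := monic_multiset_prod_of_monic (UniqueFactorizationMonoid.normalizedFactors p)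
        id (fun i hi => hmonicfactors i hi)
      simpa using h
    have hprodeq : (UniqueFactorizationMonoid.normalizedFactors p).prod = p :=
      eq_of_monic_of_associated hprodmonic hmono hassoc
    have hdeg2 : ∀ g ∈ UniqueFactorizationMonoid.normalizedFactors p, g.natDegree = 2 := by
      intro g hgm
      exact factordeg18 k n q hn hk0 hq F hF g
        (UniqueFactorizationMonoid.irreducible_of_normalized_factor g hgm)
        (UniqueFactorizationMonoid.dvd_of_mem_normalizedFactors hgm)
    refine ⟨UniqueFactorizationMonoid.normalizedFactors p, ?_, ?_, hprodeq.symm⟩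
    · intro g hgm
      exact ⟨UniqueFactorizationMonoid.irreducible_of_normalized_factor g hgm, hdeg2 g hgm⟩
    · have h0mem : (0 : F[X]) ∉ UniqueFactorizationMonoid.normalizedFactors p := by
        intro h0
        exact not_irreducible_zero
          (UniqueFactorizationMonoid.irreducible_of_normalized_factor 0 h0)
      have hsum : ((UniqueFactorizationMonoid.normalizedFactors p).map natDegree).sum = q := by
        rw [← natDegree_multiset_prod _ h0mem, hprodeq, hpnat]
      have hrep : (UniqueFactorizationMonoid.normalizedFactors p).map natDegree =
          Multiset.replicate (Multiset.card (UniqueFactorizationMonoid.normalizedFactors p)) 2 := by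
        rw [Multiset.eq_replicate]
        refine ⟨by simp, ?_⟩
        intro b hb
        obtain ⟨g, hgm, rfl⟩ := Multiset.mem_map.mp hb
        exact hdeg2 g hgm
      rw [hrep, Multiset.sum_replicate, smul_eq_mul] at hsum
      omega
end
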